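/- arXiv:0712.4092 — 6 statements merged into one kernel-verified Lean document; each statement's English description precedes it below -/
import Mathlib

section
/- Let (Ω, μ) be a probability space, N a Young function, and f a function with finite Orlicz norm ‖f − E_μ f‖_{N(μ)}. Then (1/2)·‖f − E_μ f‖_{N(μ)} ≤ ‖f − M_μ f‖_{N(μ)} ≤ 3·‖f − E_μ f‖_{N(μ)}, where M_μ f is any median of f. -/
/-!
The pointwise bound `|f - m| ≤ |f - 𝔼f| + |𝔼f - m|` and convexity of `N` give
`N (|f - m| / (v + u)) ≤ v / (v + u) * N (|f - 𝔼f| / v) + u / (v + u) * N (|𝔼f - m| / u)`,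
so an admissible scale `v` for `f - 𝔼f` yields the admissible scale `v + u` for `f - m` as soon as
`N (|𝔼f - m| / u) ≤ 1`, and symmetrically. For a median `m`, `|f - 𝔼f| ≥ |𝔼f - m|` on a set of
measure at least `1/2`, so Markov's inequality together with `N (t / 2) ≤ N t / 2` allows `u = 2v`;
in the other direction Jensen's inequality allows `u = v`. Hence the constants `3` and `2`.
-/

open MeasureTheory

/-- The Orlicz (Luxemburg) norm associated to a Young function `N`. -/
noncomputable def orliczNorm {Ω : Type*} [MeasurableSpace Ω] (μ : Measure Ω)
    (N : ℝ → ℝ) (g : Ω → ℝ) : ℝ :=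
  sInf {v : ℝ | 0 < v ∧ ∫ x, N (|g x| / v) ∂μ ≤ 1}

open Set

def orliczScales {Ω : Type*} [MeasurableSpace Ω] (μ : Measure Ω) (N : ℝ → ℝ) (g : Ω → ℝ) :
    Set ℝ :=
  {v | 0 < v ∧ ∫ x, N (|g x| / v) ∂μ ≤ 1}

lemma orliczNorm_le_mul_of_forall_exists {Ω : Type*} [MeasurableSpace Ω] {μ : Measure Ω}
    {N : ℝ → ℝ} {g h : Ω → ℝ} {C : ℝ} (hC : 0 ≤ C) (hg : (orliczScales μ N g).Nonempty)
    (hgh : ∀ v ∈ orliczScales μ N g, ∃ w ∈ orliczScales μ N h, w ≤ C * v) :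
    orliczNorm μ N h ≤ C * orliczNorm μ N g := by
  change sInf (orliczScales μ N h) ≤ C * sInf (orliczScales μ N g)
  rw [← smul_eq_mul, ← Real.sInf_smul_of_nonneg hC]
  refine le_csInf hg.smul_set ?_
  rintro _ ⟨v, hv, rfl⟩
  obtain ⟨w, hw, hwv⟩ := hgh v hv
  exact (csInf_le ⟨0, fun _ hu => hu.1.le⟩ hw).trans hwv

section YoungFunction

variable {N : ℝ → ℝ}

lemma continuousOn_Ici_of_convexOn_of_monotoneOn (hconv : ConvexOn ℝ (Ici 0) N)
    (hmono : MonotoneOn N (Ici 0)) : ContinuousOn N (Ici 0) := by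
  refine hconv.continuousOn_Ici ?_
  -- squeeze `N 0 ≤ N t ≤ (1 - t) N 0 + t N 1` as `t → 0⁺`
  have hlim : Filter.Tendsto (fun t => (1 - t) * N 0 + t * N 1) (nhdsWithin 0 (Ici 0))
      (nhds (N 0)) := by
    have : Continuous fun t : ℝ => (1 - t) * N 0 + t * N 1 := by fun_prop
    simpa using (this.continuousWithinAt (s := Ici 0) (x := 0)).tendsto
  have hupper : ∀ᶠ t in nhdsWithin 0 (Ici 0), N t ≤ (1 - t) * N 0 + t * N 1 := by
    filter_upwards [self_mem_nhdsWithin,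
      eventually_nhdsWithin_of_eventually_nhds (eventually_le_nhds one_pos)] with t ht ht1
    simpa [smul_eq_mul, add_comm] using
      hconv.2 (self_mem_Ici (a := (0 : ℝ))) (mem_Ici.2 zero_le_one)
        (sub_nonneg.2 ht1) ht (by ring)
  have hlower : ∀ᶠ t in nhdsWithin 0 (Ici 0), N 0 ≤ N t := by
    filter_upwards [self_mem_nhdsWithin] with t ht
    exact hmono self_mem_Ici ht ht
  exact tendsto_of_tendsto_of_tendsto_of_le_of_le' tendsto_const_nhds hlim hlower hupper

lemma ConvexOn.map_mul_le_mul_of_map_zero (hconv : ConvexOn ℝ (Ici 0) N) (hN0 : N 0 = 0)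
    {s t : ℝ} (hs₀ : 0 ≤ s) (hs₁ : s ≤ 1) (ht : 0 ≤ t) : N (s * t) ≤ s * N t := by
  simpa [smul_eq_mul, hN0] using
    hconv.2 ht self_mem_Ici hs₀ (sub_nonneg.2 hs₁) (add_sub_cancel s 1)

lemma map_div_add_le_of_le_add (hconv : ConvexOn ℝ (Ici 0) N) (hmono : MonotoneOn N (Ici 0))
    {a b c w u : ℝ} (ha : 0 ≤ a) (hb : 0 ≤ b) (hc : 0 ≤ c) (hw : 0 < w) (hu : 0 < u)
    (habc : a ≤ b + c) :
    N (a / (w + u)) ≤ w / (w + u) * N (b / w) + u / (w + u) * N (c / u) := by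
  have hwu : 0 < w + u := add_pos hw hu
  have hcomb : w / (w + u) * (b / w) + u / (w + u) * (c / u) = (b + c) / (w + u) := by
    field_simp
  calc N (a / (w + u)) ≤ N (w / (w + u) * (b / w) + u / (w + u) * (c / u)) := by
        rw [hcomb]
        exact hmono (div_nonneg ha hwu.le) (div_nonneg (add_nonneg hb hc) hwu.le) (by gcongr)
    _ ≤ w / (w + u) * N (b / w) + u / (w + u) * N (c / u) :=
        hconv.2 (div_nonneg hb hw.le) (div_nonneg hc hu.le) (by positivity) (by positivity)
          (by field_simp)

lemma MonotoneOn.aestronglyMeasurable_comp_abs_div {Ω : Type*} [MeasurableSpace Ω]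
    {μ : Measure Ω} (hmono : MonotoneOn N (Ici 0)) {g : Ω → ℝ} (hg : AEMeasurable g μ)
    {v : ℝ} (hv : 0 ≤ v) : AEStronglyMeasurable (fun x => N (|g x| / v)) μ := by
  have hmax : Monotone fun t => N (max t 0) := fun a b hab =>
    hmono (le_max_right a 0) (le_max_right b 0) (max_le_max_right 0 hab)
  have hmeas := hmax.measurable.comp_aemeasurable (hg.abs.div_const v)
  refine hmeas.aestronglyMeasurable.congr (ae_of_all _ fun x => ?_)
  simp only [Function.comp_apply, max_eq_left (div_nonneg (abs_nonneg (g x)) hv)]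

end YoungFunction

section Modular

variable {Ω : Type*} [MeasurableSpace Ω] {μ : Measure Ω} {N : ℝ → ℝ}

lemma integrable_map_div_add_of_abs_le_add [IsFiniteMeasure μ] (hNnn : ∀ t, 0 ≤ t → 0 ≤ N t)
    (hconv : ConvexOn ℝ (Ici 0) N) (hmono : MonotoneOn N (Ici 0)) {g h : Ω → ℝ} {c w u : ℝ}
    (hh : AEMeasurable h μ) (hc : 0 ≤ c) (hw : 0 < w) (hu : 0 < u)
    (hgh : ∀ x, |h x| ≤ |g x| + c) (hg : Integrable (fun x => N (|g x| / w)) μ) :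
    Integrable (fun x => N (|h x| / (w + u))) μ := by
  refine ((hg.const_mul (w / (w + u))).add (integrable_const (u / (w + u) * N (c / u)))).mono'
    (hmono.aestronglyMeasurable_comp_abs_div hh (add_pos hw hu).le) (ae_of_all _ fun x => ?_)
  rw [Real.norm_of_nonneg (hNnn _ (by positivity))]
  exact map_div_add_le_of_le_add hconv hmono (abs_nonneg _) (abs_nonneg _) hc hw hu (hgh x)

lemma integral_map_div_add_le_of_abs_le_add [IsProbabilityMeasure μ]
    (hNnn : ∀ t, 0 ≤ t → 0 ≤ N t) (hconv : ConvexOn ℝ (Ici 0) N) (hmono : MonotoneOn N (Ici 0))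
    {g h : Ω → ℝ} {c w u : ℝ} (hh : AEMeasurable h μ) (hc : 0 ≤ c) (hw : 0 < w) (hu : 0 < u)
    (hgh : ∀ x, |h x| ≤ |g x| + c) (hg : Integrable (fun x => N (|g x| / w)) μ) :
    ∫ x, N (|h x| / (w + u)) ∂μ ≤
      w / (w + u) * ∫ x, N (|g x| / w) ∂μ + u / (w + u) * N (c / u) := by
  have hint := integrable_map_div_add_of_abs_le_add hNnn hconv hmono hh hc hw hu hgh hg
  calc ∫ x, N (|h x| / (w + u)) ∂μ
      ≤ ∫ x, (w / (w + u) * N (|g x| / w) + u / (w + u) * N (c / u)) ∂μ :=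
        integral_mono hint ((hg.const_mul _).add (integrable_const _)) fun x =>
          map_div_add_le_of_le_add hconv hmono (abs_nonneg _) (abs_nonneg _) hc hw hu (hgh x)
    _ = w / (w + u) * ∫ x, N (|g x| / w) ∂μ + u / (w + u) * N (c / u) := by
        rw [integral_add (hg.const_mul _) (integrable_const _), integral_const_mul]
        simp

lemma exists_mem_orliczScales_le_add [IsProbabilityMeasure μ]
    (hNnn : ∀ t, 0 ≤ t → 0 ≤ N t) (hconv : ConvexOn ℝ (Ici 0) N) (hmono : MonotoneOn N (Ici 0))
    {g h : Ω → ℝ} {c v u : ℝ} (hg : AEMeasurable g μ) (hh : AEMeasurable h μ) (hc : 0 ≤ c)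
    (hgh : ∀ x, |h x| ≤ |g x| + c) (hhg : ∀ x, |g x| ≤ |h x| + c)
    (hgv : v ∈ orliczScales μ N g) (hu : 0 < u)
    (hcu : Integrable (fun x => N (|g x| / v)) μ → N (c / u) ≤ 1) :
    ∃ w ∈ orliczScales μ N h, w ≤ v + u := by
  obtain ⟨hv, hgv⟩ := hgv
  by_cases hint : Integrable (fun x => N (|g x| / v)) μ
  · refine ⟨v + u, ⟨add_pos hv hu, ?_⟩, le_rfl⟩
    calc ∫ x, N (|h x| / (v + u)) ∂μ
        ≤ v / (v + u) * ∫ x, N (|g x| / v) ∂μ + u / (v + u) * N (c / u) :=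
          integral_map_div_add_le_of_abs_le_add hNnn hconv hmono hh hc hv hu hgh hint
      _ ≤ v / (v + u) * 1 + u / (v + u) * 1 := by gcongr; exact hcu hint
      _ = 1 := by field_simp
  · -- `v / 2` is admissible for `h` only because a non-integrable function has integral `0`
    refine ⟨v / 2, ⟨half_pos hv, ?_⟩, by linarith⟩
    have hnot : ¬Integrable (fun x => N (|h x| / (v / 2))) μ := fun hint' => hint <| by
      simpa using integrable_map_div_add_of_abs_le_add hNnn hconv hmono hg hc (half_pos hv)
        (half_pos hv) hhg hint'
    rw [integral_undef hnot]
    exact zero_le_one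

end Modular

section MeanMedian

variable {Ω : Type*} [MeasurableSpace Ω] {μ : Measure Ω} {N : ℝ → ℝ}

lemma map_abs_integral_le_integral_map_abs [IsProbabilityMeasure μ]
    (hconv : ConvexOn ℝ (Ici 0) N) (hmono : MonotoneOn N (Ici 0)) {φ : Ω → ℝ}
    (hφ : Integrable φ μ) (hNφ : Integrable (fun x => N |φ x|) μ) :
    N |∫ x, φ x ∂μ| ≤ ∫ x, N |φ x| ∂μ :=
  calc N |∫ x, φ x ∂μ| ≤ N (∫ x, |φ x| ∂μ) :=
        hmono (mem_Ici.2 (abs_nonneg _)) (mem_Ici.2 (integral_nonneg fun x => abs_nonneg (φ x)))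
          abs_integral_le_integral_abs
    _ ≤ ∫ x, N |φ x| ∂μ :=
        hconv.map_integral_le (continuousOn_Ici_of_convexOn_of_monotoneOn hconv hmono)
          isClosed_Ici (ae_of_all _ fun x => abs_nonneg (φ x)) hφ.abs hNφ

lemma map_abs_integral_sub_div_le [IsProbabilityMeasure μ]
    (hconv : ConvexOn ℝ (Ici 0) N) (hmono : MonotoneOn N (Ici 0)) {f : Ω → ℝ}
    (hf : Integrable f μ) {m w : ℝ} (hw : 0 < w)
    (hint : Integrable (fun x => N (|f x - m| / w)) μ) :
    N (|(∫ x, f x ∂μ) - m| / w) ≤ ∫ x, N (|f x - m| / w) ∂μ := by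
  have habs : ∀ t, |t / w| = |t| / w := fun t => by rw [abs_div, abs_of_pos hw]
  have hmean : ∫ x, (f x - m) / w ∂μ = ((∫ x, f x ∂μ) - m) / w := by
    rw [integral_div, integral_sub hf (integrable_const m)]
    simp
  simpa only [hmean, habs] using map_abs_integral_le_integral_map_abs hconv hmono
    (φ := fun x => (f x - m) / w) ((hf.sub (integrable_const m)).div_const w)
    (by simpa only [habs] using hint)

lemma half_le_measureReal_abs_sub_median_le [IsFiniteMeasure μ] {f : Ω → ℝ} {m : ℝ}
    (hm₁ : (1 / 2 : ENNReal) ≤ μ {x | m ≤ f x}) (hm₂ : (1 / 2 : ENNReal) ≤ μ {x | f x ≤ m})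
    (a : ℝ) : 1 / 2 ≤ μ.real {x | |a - m| ≤ |f x - a|} := by
  have h : (1 / 2 : ENNReal) ≤ μ {x | |a - m| ≤ |f x - a|} := by
    rcases le_total a m with ham | hma
    · refine hm₁.trans (measure_mono fun x (hx : m ≤ f x) => ?_)
      rw [mem_ofPred_eq, abs_of_nonpos (sub_nonpos.2 ham)]
      exact (by linarith : -(a - m) ≤ f x - a).trans (le_abs_self _)
    · refine hm₂.trans (measure_mono fun x (hx : f x ≤ m) => ?_)
      rw [mem_ofPred_eq, abs_of_nonneg (sub_nonneg.2 hma)]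
      exact (by linarith : a - m ≤ -(f x - a)).trans (neg_le_abs _)
  simpa [measureReal_def] using ENNReal.toReal_mono (measure_ne_top μ _) h

lemma map_abs_sub_median_div_le [IsFiniteMeasure μ] (hNnn : ∀ t, 0 ≤ t → 0 ≤ N t)
    (hmono : MonotoneOn N (Ici 0)) {f : Ω → ℝ} {m : ℝ}
    (hm₁ : (1 / 2 : ENNReal) ≤ μ {x | m ≤ f x}) (hm₂ : (1 / 2 : ENNReal) ≤ μ {x | f x ≤ m})
    {a v : ℝ} (hv : 0 < v) (hint : Integrable (fun x => N (|f x - a| / v)) μ) :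
    N (|a - m| / v) ≤ 2 * ∫ x, N (|f x - a| / v) ∂μ := by
  set ε := N (|a - m| / v)
  have hε : 0 ≤ ε := hNnn _ (by positivity)
  have hmarkov := mul_meas_ge_le_integral_of_nonneg
    (ae_of_all μ fun x => hNnn (|f x - a| / v) (by positivity)) hint ε
  have hsub : {x | |a - m| ≤ |f x - a|} ⊆ {x | ε ≤ N (|f x - a| / v)} := fun x hx =>
    hmono (mem_Ici.2 (by positivity)) (mem_Ici.2 (by positivity))
      (div_le_div_of_nonneg_right hx hv.le)
  have hhalf : 1 / 2 ≤ μ.real {x | ε ≤ N (|f x - a| / v)} :=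
    (half_le_measureReal_abs_sub_median_le hm₁ hm₂ a).trans (measureReal_mono hsub)
  nlinarith

lemma map_abs_sub_median_div_two_mul_le_one [IsProbabilityMeasure μ] (hN0 : N 0 = 0)
    (hNnn : ∀ t, 0 ≤ t → 0 ≤ N t) (hconv : ConvexOn ℝ (Ici 0) N) (hmono : MonotoneOn N (Ici 0))
    {f : Ω → ℝ} {m : ℝ} (hm₁ : (1 / 2 : ENNReal) ≤ μ {x | m ≤ f x})
    (hm₂ : (1 / 2 : ENNReal) ≤ μ {x | f x ≤ m}) {a v : ℝ}
    (hv : v ∈ orliczScales μ N (fun x => f x - a))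
    (hint : Integrable (fun x => N (|f x - a| / v)) μ) :
    N (|a - m| / (2 * v)) ≤ 1 := by
  have hhalf : |a - m| / (2 * v) = 1 / 2 * (|a - m| / v) := by field_simp
  calc N (|a - m| / (2 * v)) ≤ 1 / 2 * N (|a - m| / v) := by
        rw [hhalf]
        exact hconv.map_mul_le_mul_of_map_zero hN0 (by norm_num) (by norm_num)
          (div_nonneg (abs_nonneg _) hv.1.le)
    _ ≤ 1 / 2 * (2 * ∫ x, N (|f x - a| / v) ∂μ) := by
        gcongr
        exact map_abs_sub_median_div_le hNnn hmono hm₁ hm₂ hv.1 hint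
    _ ≤ 1 := by linarith [hv.2]

end MeanMedian

theorem mean_median_orlicz_equivalence_general {Ω : Type*} [MeasurableSpace Ω] (μ : Measure Ω)
    [IsProbabilityMeasure μ] (N : ℝ → ℝ)
    (hN0 : N 0 = 0)
    (hNnn : ∀ t, 0 ≤ t → 0 ≤ N t)
    (hconv : ConvexOn ℝ (Set.Ici 0) N)
    (hmono : MonotoneOn N (Set.Ici 0))
    (f : Ω → ℝ) (hf : Integrable f μ)
    (m : ℝ)
    (hm₁ : (1 / 2 : ENNReal) ≤ μ {x | m ≤ f x})
    (hm₂ : (1 / 2 : ENNReal) ≤ μ {x | f x ≤ m})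
    (hfin : {v : ℝ | 0 < v ∧ ∫ x, N (|f x - ∫ y, f y ∂μ| / v) ∂μ ≤ 1}.Nonempty) :
    (1 / 2 : ℝ) * orliczNorm μ N (fun x => f x - ∫ y, f y ∂μ)
        ≤ orliczNorm μ N (fun x => f x - m) ∧
      orliczNorm μ N (fun x => f x - m)
        ≤ 3 * orliczNorm μ N (fun x => f x - ∫ y, f y ∂μ) := by
  set E := ∫ y, f y ∂μ
  have hfE : AEMeasurable (fun x => f x - E) μ := hf.aemeasurable.sub_const E
  have hfm : AEMeasurable (fun x => f x - m) μ := hf.aemeasurable.sub_const m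
  have hmE : ∀ x, |f x - m| ≤ |f x - E| + |E - m| := fun x => abs_sub_le _ _ _
  have hEm : ∀ x, |f x - E| ≤ |f x - m| + |E - m| := fun x => abs_sub_comm m E ▸ abs_sub_le _ _ _
  have upper : ∀ v ∈ orliczScales μ N (fun x => f x - E),
      ∃ w ∈ orliczScales μ N (fun x => f x - m), w ≤ 3 * v := fun v hv =>
    (exists_mem_orliczScales_le_add hNnn hconv hmono hfE hfm (abs_nonneg _) hmE hEm hv
      (mul_pos two_pos hv.1)
      (map_abs_sub_median_div_two_mul_le_one hN0 hNnn hconv hmono hm₁ hm₂ hv)).imp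
      fun _ hw => ⟨hw.1, hw.2.trans_eq (by ring)⟩
  have lower : ∀ v ∈ orliczScales μ N (fun x => f x - m),
      ∃ w ∈ orliczScales μ N (fun x => f x - E), w ≤ 2 * v := fun v hv =>
    (exists_mem_orliczScales_le_add hNnn hconv hmono hfm hfE (abs_nonneg _) hEm hmE hv hv.1
      fun hint => (map_abs_integral_sub_div_le hconv hmono hf hv.1 hint).trans hv.2).imp
      fun _ hw => ⟨hw.1, hw.2.trans_eq (by ring)⟩
  obtain ⟨w, hw, -⟩ := upper _ hfin.some_mem
  constructor
  · linarith [orliczNorm_le_mul_of_forall_exists zero_le_two ⟨w, hw⟩ lower]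
  · exact orliczNorm_le_mul_of_forall_exists zero_le_three hfin upper

/-- `(1/2)·‖f − E_μ f‖_{N(μ)} ≤ ‖f − M_μ f‖_{N(μ)} ≤ 3·‖f − E_μ f‖_{N(μ)}`
for any median `m` of `f`, for an integrable `f` with finite Orlicz norm. -/
theorem mean_median_orlicz_equivalence {Ω : Type*} [MeasurableSpace Ω] (μ : Measure Ω)
    [IsProbabilityMeasure μ] (N : ℝ → ℝ)
    (hN0 : N 0 = 0)
    (hNnn : ∀ t, 0 ≤ t → 0 ≤ N t)
    (hconv : ConvexOn ℝ (Set.Ici 0) N)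
    (hmono : MonotoneOn N (Set.Ici 0))
    (hnz : ∃ t, 0 ≤ t ∧ N t ≠ 0)
    (f : Ω → ℝ) (hf : Integrable f μ)
    (m : ℝ)
    (hm₁ : (1 / 2 : ENNReal) ≤ μ {x | m ≤ f x})
    (hm₂ : (1 / 2 : ENNReal) ≤ μ {x | f x ≤ m})
    (hfin : {v : ℝ | 0 < v ∧ ∫ x, N (|f x - ∫ y, f y ∂μ| / v) ∂μ ≤ 1}.Nonempty) :
    (1 / 2 : ℝ) * orliczNorm μ N (fun x => f x - ∫ y, f y ∂μ)
        ≤ orliczNorm μ N (fun x => f x - m) ∧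
      orliczNorm μ N (fun x => f x - m)
        ≤ 3 * orliczNorm μ N (fun x => f x - ∫ y, f y ∂μ) :=
  mean_median_orlicz_equivalence_general μ N hN0 hNnn hconv hmono f hf m hm₁ hm₂ hfin
end

section
/- Single-step Cheeger stability: let d be a metric on a set Ω, let λ_K, λ_L be probability measures with λ_L = λ_K|_L / λ_K(L) for a Borel set L with λ_K(L) ≥ p > 1/2, and suppose the isoperimetric profile of (Ω, d, λ_K) satisfies I_{λ_K}(t) ≥ D_K·min(t, 1−t) where moreover for every Borel set A with λ_K(A) = 1/2 one has λ_K⁺(A) ≥ D_{Che}(K)/2 with D_{Che}(K) = 2·I_{λ_K}(1/2). Then, assuming additionally I_{λ_K} is concave and symmetric about 1/2, D_{Che}(K) ≥ (2p − 1)·D_{Che}(L), where D_{Che}(L) is the Cheeger constant of (Ω, d, λ_L). -/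
/-
Write q = λ_K(L) ≥ p. For A ⊆ B, conditioning on L gives
q·(λ_L(B) − λ_L(A)) = λ_K(L ∩ (B \ A)) ≤ λ_K(B) − λ_K(A), hence λ_K⁺(X) ≥ q·λ_L⁺(X); and
q·λ_L(X) = λ_K(X ∩ L) lies in [λ_K(X) − (1 − q), λ_K(X)]. A Cheeger bound D for λ_L therefore
gives I_{λ_K}(t) ≥ D·min(t − (1 − q), q − t), which at t = 1/2 is D·(q − 1/2) ≥ D·(p − 1/2).

This fails only when I_{λ_K}(1/2) = ∞, whose real part is the junk value 0. If some D > 0 were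
then a Cheeger bound for λ_L, concavity of the real profile would force I_{λ_K} = ∞ on (1 − q, q).
But a set of λ_K-measure in (1 − q, q) contains a closed F of measure in that range, and F_ε still
has measure in it, and finite boundary measure, at any small ε where the monotone map
ε ↦ λ_K(F_ε) is differentiable. So no such set exists: every positive λ_L-mass is then at least
(2q − 1)/q, every λ_L-boundary measure is 0 or ∞, and every D ≥ 0 is a Cheeger bound for λ_L,
so the supremum defining D_{Che}(L) is the junk value 0.
-/

open MeasureTheory Filter

/-- Minkowski (exterior) boundary measure of a set `A` with respect to a metric and a
measure `μ`. -/
noncomputable def boundaryMeasure {Ω : Type*} [PseudoMetricSpace Ω] [MeasurableSpace Ω]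
    (μ : Measure Ω) (A : Set Ω) : ENNReal :=
  liminf (fun ε : ℝ =>
      ENNReal.ofReal (((μ (Metric.thickening ε A)).toReal - (μ A).toReal) / ε))
    (nhdsWithin 0 (Set.Ioi 0))

/-- Isoperimetric profile of a metric probability space. -/
noncomputable def isoProfile {Ω : Type*} [PseudoMetricSpace Ω] [MeasurableSpace Ω]
    (μ : Measure Ω) (t : ℝ) : ENNReal :=
  ⨅ (A : Set Ω) (_ : MeasurableSet A) (_ : (μ A).toReal = t), boundaryMeasure μ A

/-- The Cheeger constant of a metric probability space. -/
noncomputable def cheegerConst {Ω : Type*} [PseudoMetricSpace Ω] [MeasurableSpace Ω]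
    (μ : Measure Ω) : ℝ :=
  sSup {D : ℝ | 0 ≤ D ∧ ∀ A : Set Ω, MeasurableSet A →
    ENNReal.ofReal (D * min (μ A).toReal (1 - (μ A).toReal)) ≤ boundaryMeasure μ A}

open Metric ProbabilityTheory Set
open scoped Topology

lemma ConcaveOn.eq_zero_of_nonneg_of_apply_half_eq_zero {f : ℝ → ℝ}
    (hf : ConcaveOn ℝ (Ioo 0 1) f) (hnonneg : ∀ t ∈ Ioo (0 : ℝ) 1, 0 ≤ f t)
    (hhalf : f (1 / 2) = 0) {t : ℝ} (ht : t ∈ Ioo (0 : ℝ) 1) : f t = 0 := by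
  have ht' : 1 - t ∈ Ioo (0 : ℝ) 1 := ⟨by linarith [ht.2], by linarith [ht.1]⟩
  have hmid := hf.2 ht ht' (by norm_num : (0 : ℝ) ≤ 1 / 2) (by norm_num : (0 : ℝ) ≤ 1 / 2)
    (by norm_num)
  rw [smul_eq_mul, smul_eq_mul, smul_eq_mul, smul_eq_mul,
    show 1 / 2 * t + 1 / 2 * (1 - t) = (1 / 2 : ℝ) by ring, hhalf] at hmid
  linarith [hnonneg t ht, hnonneg _ ht']

section

variable {Ω : Type*} [MeasurableSpace Ω]

lemma toReal_measure_mul_toReal_cond (μ : Measure Ω) [IsFiniteMeasure μ] {L : Set Ω}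
    (hL : MeasurableSet L) (S : Set Ω) :
    (μ L).toReal * (μ[S|L]).toReal = (μ (L ∩ S)).toReal := by
  rw [← ENNReal.toReal_mul, mul_comm, cond_mul_eq_inter hL]

lemma toReal_measure_mul_sub_cond_le (μ : Measure Ω) [IsFiniteMeasure μ] {L A B : Set Ω}
    (hL : MeasurableSet L) (hAB : A ⊆ B) :
    (μ L).toReal * ((μ[B|L]).toReal - (μ[A|L]).toReal) ≤ (μ B).toReal - (μ A).toReal := by
  have hA := measureReal_inter_add_sdiff (μ := μ) (s := A) hL
  have hB := measureReal_inter_add_sdiff (μ := μ) (s := B) hL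
  have hAB' : μ.real (A \ L) ≤ μ.real (B \ L) := measureReal_mono (sdiff_subset_sdiff_left hAB)
  simp only [Measure.real] at hA hB hAB'
  rw [mul_sub, toReal_measure_mul_toReal_cond μ hL, toReal_measure_mul_toReal_cond μ hL,
    inter_comm L A, inter_comm L B]
  linarith

lemma cond_eq_zero_or_le_of_forall_measure_notMem_Ioo (μ : Measure Ω) [IsProbabilityMeasure μ]
    {L : Set Ω} (hL : MeasurableSet L) (hq : 0 < (μ L).toReal)
    (hno : ∀ X, MeasurableSet X → (μ X).toReal ∉ Ioo (1 - (μ L).toReal) (μ L).toReal)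
    {S : Set Ω} (hS : MeasurableSet S) :
    μ[S|L] = 0 ∨ (2 * (μ L).toReal - 1) / (μ L).toReal ≤ (μ[S|L]).toReal := by
  have hsplit := measureReal_inter_add_sdiff (μ := μ) (s := L) hS
  have hLS := toReal_measure_mul_toReal_cond μ hL S
  have hout := hno _ (hL.diff hS)
  simp only [mem_Ioo, not_and_or, not_lt] at hout
  simp only [Measure.real] at hsplit
  rcases hout with hout | hout
  · right
    rw [div_le_iff₀ hq, mul_comm (μ[S|L]).toReal, hLS]
    linarith
  · left
    have hLS0 : μ.real (L ∩ S) = 0 :=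
      le_antisymm (by simp only [Measure.real]; linarith) measureReal_nonneg
    rw [cond_apply hL, (measureReal_eq_zero_iff (measure_ne_top _ _)).1 hLS0, mul_zero]

end

section

variable {Ω : Type*} [PseudoMetricSpace Ω] [MeasurableSpace Ω]

def IsCheegerBound (μ : Measure Ω) (D : ℝ) : Prop :=
  0 ≤ D ∧ ∀ A : Set Ω, MeasurableSet A →
    ENNReal.ofReal (D * min (μ A).toReal (1 - (μ A).toReal)) ≤ boundaryMeasure μ A

lemma cheegerConst_eq_sSup (μ : Measure Ω) :
    cheegerConst μ = sSup {D | IsCheegerBound μ D} := rfl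

lemma isCheegerBound_zero (μ : Measure Ω) : IsCheegerBound μ 0 :=
  ⟨le_rfl, fun A _ => by simp⟩

lemma isoProfile_le_boundaryMeasure (μ : Measure Ω) {A : Set Ω} (hA : MeasurableSet A) :
    isoProfile μ (μ A).toReal ≤ boundaryMeasure μ A :=
  iInf₂_le_of_le A hA (iInf_le _ rfl)

lemma ofReal_mul_boundaryMeasure_le {μ ν : Measure Ω} {A : Set Ω} {c : ℝ} (hc : 0 ≤ c)
    (h : ∀ ε > 0, c * ((ν (thickening ε A)).toReal - (ν A).toReal) ≤
      (μ (thickening ε A)).toReal - (μ A).toReal) :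
    ENNReal.ofReal c * boundaryMeasure ν A ≤ boundaryMeasure μ A := by
  rw [boundaryMeasure, boundaryMeasure, ← ENNReal.liminf_const_mul_of_ne_top ENNReal.ofReal_ne_top]
  refine liminf_le_liminf (eventually_mem_nhdsWithin.mono fun ε (hε : 0 < ε) => ?_)
  rw [← ENNReal.ofReal_mul hc, ← mul_div_assoc]
  exact ENNReal.ofReal_le_ofReal (div_le_div_of_nonneg_right (h ε hε) hε.le)

lemma boundaryMeasure_eq_zero_of_measure_thickening_sdiff_eq_zero {ν : Measure Ω} {A : Set Ω}
    {ε₀ : ℝ} (hε₀ : 0 < ε₀) (h : ν (thickening ε₀ A \ A) = 0) :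
    boundaryMeasure ν A = 0 := by
  have hflat : ∀ᶠ ε in 𝓝[>] (0 : ℝ),
      ENNReal.ofReal (((ν (thickening ε A)).toReal - (ν A).toReal) / ε) = 0 := by
    filter_upwards [Ioc_mem_nhdsGT hε₀] with ε hε
    rw [← measure_eq_measure_of_null_sdiff (self_subset_thickening hε.1 A)
      (measure_mono_null (sdiff_subset_sdiff_left (thickening_mono hε.2 A)) h)]
    simp
  rw [boundaryMeasure, liminf_congr hflat, liminf_const]

lemma boundaryMeasure_eq_top_of_le_measure_thickening_sdiff {ν : Measure Ω} [IsFiniteMeasure ν]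
    [OpensMeasurableSpace Ω] {A : Set Ω} (hA : MeasurableSet A) {η : ℝ} (hη : 0 < η)
    (h : ∀ ε > 0, η ≤ (ν (thickening ε A \ A)).toReal) :
    boundaryMeasure ν A = ⊤ := by
  have hblowup : Tendsto (fun ε : ℝ => ENNReal.ofReal (η * ε⁻¹)) (𝓝[>] 0) (𝓝 ⊤) :=
    ENNReal.tendsto_ofReal_atTop.comp (tendsto_inv_nhdsGT_zero.const_mul_atTop hη)
  refine top_unique (hblowup.liminf_eq ▸ liminf_le_liminf ?_)
  filter_upwards [self_mem_nhdsWithin] with ε (hε : 0 < ε)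
  refine ENNReal.ofReal_le_ofReal ?_
  rw [← div_eq_mul_inv]
  refine div_le_div_of_nonneg_right ?_ hε.le
  have := measureReal_sdiff (μ := ν) (self_subset_thickening hε A) hA
  simp only [Measure.real] at this
  linarith [h ε hε]

lemma boundaryMeasure_eq_zero_of_measure_gap {ν : Measure Ω} [IsFiniteMeasure ν]
    [OpensMeasurableSpace Ω] {η : ℝ} (hη : 0 < η)
    (hgap : ∀ S, MeasurableSet S → ν S = 0 ∨ η ≤ (ν S).toReal)
    {A : Set Ω} (hA : MeasurableSet A) (hfin : boundaryMeasure ν A ≠ ⊤) :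
    boundaryMeasure ν A = 0 := by
  by_contra hne
  refine hfin (boundaryMeasure_eq_top_of_le_measure_thickening_sdiff hA hη fun ε hε => ?_)
  exact (hgap _ (isOpen_thickening.measurableSet.diff hA)).resolve_left fun h0 =>
    hne (boundaryMeasure_eq_zero_of_measure_thickening_sdiff_eq_zero hε h0)

lemma not_bddAbove_isCheegerBound {ν : Measure Ω} {D : ℝ} (hD : IsCheegerBound ν D)
    (hDpos : 0 < D)
    (h : ∀ A, MeasurableSet A → boundaryMeasure ν A ≠ ⊤ → boundaryMeasure ν A = 0) :
    ¬ BddAbove {D | IsCheegerBound ν D} := by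
  have hall : ∀ D' ≥ 0, IsCheegerBound ν D' := fun D' hD' => ⟨hD', fun A hA => by
    by_cases htop : boundaryMeasure ν A = ⊤
    · exact htop ▸ le_top
    have hDA := hD.2 A hA
    rw [h A hA htop, nonpos_iff_eq_zero, ENNReal.ofReal_eq_zero] at hDA ⊢
    exact mul_nonpos_of_nonneg_of_nonpos hD' (nonpos_of_mul_nonpos_right hDA hDpos)⟩
  rintro ⟨M, hM⟩
  linarith [hM (hall (max M 0 + 1) (by positivity)), le_max_left M 0]

lemma measure_mul_boundaryMeasure_cond_le [OpensMeasurableSpace Ω] (μ : Measure Ω)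
    [IsFiniteMeasure μ] {L : Set Ω} (hL : MeasurableSet L) (A : Set Ω) :
    μ L * boundaryMeasure μ[|L] A ≤ boundaryMeasure μ A := by
  rw [← ENNReal.ofReal_toReal (measure_ne_top μ L)]
  exact ofReal_mul_boundaryMeasure_le ENNReal.toReal_nonneg fun ε hε =>
    toReal_measure_mul_sub_cond_le μ hL (self_subset_thickening hε A)

lemma ofReal_mul_min_le_isoProfile [OpensMeasurableSpace Ω] (μ : Measure Ω)
    [IsProbabilityMeasure μ] {L : Set Ω} (hL : MeasurableSet L) {D : ℝ}
    (hD : IsCheegerBound μ[|L] D) (t : ℝ) :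
    ENNReal.ofReal (D * min (t - (1 - (μ L).toReal)) ((μ L).toReal - t)) ≤ isoProfile μ t := by
  refine le_iInf₂ fun X hX => le_iInf fun hXt => ?_
  subst hXt
  set q := (μ L).toReal
  have hLX := toReal_measure_mul_toReal_cond μ hL X
  have hsplit := measureReal_inter_add_sdiff (μ := μ) (s := X) hL
  have hout : μ.real (X \ L) ≤ μ.real Lᶜ := measureReal_mono (sdiff_subset_compl X L)
  have hin : μ.real (X ∩ L) ≤ μ.real X := measureReal_mono inter_subset_left
  rw [measureReal_compl hL, probReal_univ] at hout
  simp only [Measure.real] at hsplit hout hin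
  rw [inter_comm] at hLX
  have hmin : min ((μ X).toReal - (1 - q)) (q - (μ X).toReal) ≤
      q * min (μ[X|L]).toReal (1 - (μ[X|L]).toReal) := by
    rw [mul_min_of_nonneg _ _ ENNReal.toReal_nonneg, mul_one_sub, hLX]
    exact min_le_min (by linarith) (by linarith)
  calc ENNReal.ofReal (D * min ((μ X).toReal - (1 - q)) (q - (μ X).toReal))
      ≤ ENNReal.ofReal q * ENNReal.ofReal (D * min (μ[X|L]).toReal (1 - (μ[X|L]).toReal)) := by
        rw [← ENNReal.ofReal_mul ENNReal.toReal_nonneg, mul_left_comm]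
        exact ENNReal.ofReal_le_ofReal (mul_le_mul_of_nonneg_left hmin hD.1)
    _ ≤ μ L * boundaryMeasure μ[|L] X := by
        rw [ENNReal.ofReal_toReal (measure_ne_top μ L)]
        gcongr
        exact hD.2 X hX
    _ ≤ boundaryMeasure μ X := measure_mul_boundaryMeasure_cond_le μ hL X

lemma boundaryMeasure_thickening_ne_top_of_differentiableAt (μ : Measure Ω) [IsFiniteMeasure μ]
    {F : Set Ω} {ε : ℝ}
    (hd : DifferentiableAt ℝ (fun r => (μ (thickening r F)).toReal) ε) :
    boundaryMeasure μ (thickening ε F) ≠ ⊤ := by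
  have hslope := (ENNReal.tendsto_ofReal hd.hasDerivAt.tendsto_slope_zero_right).liminf_eq
  refine ne_top_of_le_ne_top ENNReal.ofReal_ne_top (le_of_le_of_eq (liminf_le_liminf ?_) hslope)
  filter_upwards [self_mem_nhdsWithin] with δ (hδ : 0 < δ)
  refine ENNReal.ofReal_le_ofReal ?_
  rw [smul_eq_mul, inv_mul_eq_div]
  refine div_le_div_of_nonneg_right (sub_le_sub_right ?_ _) hδ.le
  refine ENNReal.toReal_mono (measure_ne_top _ _) (measure_mono ?_)
  simpa only [add_comm δ ε] using thickening_thickening_subset δ ε F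

lemma exists_boundaryMeasure_thickening_ne_top (μ : Measure Ω) [IsFiniteMeasure μ]
    [OpensMeasurableSpace Ω] {F : Set Ω} (hF : IsClosed F) {b : ℝ} (hb : (μ F).toReal < b) :
    ∃ ε > 0, (μ (thickening ε F)).toReal < b ∧ boundaryMeasure μ (thickening ε F) ≠ ⊤ := by
  set h : ℝ → ℝ := fun r => (μ (thickening r F)).toReal
  have hmono : Monotone h := fun r s hrs =>
    ENNReal.toReal_mono (measure_ne_top μ _) (measure_mono (thickening_mono hrs F))
  have hlim : Tendsto h (𝓝[>] 0) (𝓝 (μ F).toReal) := by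
    have := tendsto_measure_thickening (μ := μ) (s := F) ⟨1, one_pos, measure_ne_top μ _⟩
    rw [hF.closure_eq] at this
    exact (ENNReal.tendsto_toReal (measure_ne_top μ F)).comp this
  obtain ⟨u, hu, hub⟩ := mem_nhdsGT_iff_exists_Ioc_subset.1 (hlim.eventually_lt_const hb)
  obtain ⟨ε, hε, hdiff⟩ := Measure.exists_mem_of_measure_ne_zero_of_ae
    (show volume (Ioo 0 u) ≠ 0 by simpa using hu) (ae_restrict_of_ae hmono.ae_differentiableAt)
  exact ⟨ε, hε.1, hub ⟨hε.1, hε.2.le⟩,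
    boundaryMeasure_thickening_ne_top_of_differentiableAt μ hdiff⟩

lemma exists_boundaryMeasure_ne_top_of_measure_mem_Ioo [BorelSpace Ω] (μ : Measure Ω)
    [IsFiniteMeasure μ] {X : Set Ω} (hX : MeasurableSet X) {a b : ℝ} (ha : 0 ≤ a)
    (hXab : (μ X).toReal ∈ Ioo a b) :
    ∃ C, MeasurableSet C ∧ (μ C).toReal ∈ Ioo a b ∧ boundaryMeasure μ C ≠ ⊤ := by
  obtain ⟨F, hFX, hF, haF⟩ := MeasurableSet.exists_lt_isClosed_of_ne_top (μ := μ) hX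
    (measure_ne_top μ X) ((ENNReal.ofReal_lt_iff_lt_toReal ha (measure_ne_top μ X)).2 hXab.1)
  rw [ENNReal.ofReal_lt_iff_lt_toReal ha (measure_ne_top μ F)] at haF
  have hFb : (μ F).toReal < b :=
    (ENNReal.toReal_mono (measure_ne_top μ X) (measure_mono hFX)).trans_lt hXab.2
  obtain ⟨ε, hε, hεb, hfin⟩ := exists_boundaryMeasure_thickening_ne_top μ hF hFb
  refine ⟨thickening ε F, isOpen_thickening.measurableSet, ⟨haF.trans_le ?_, hεb⟩, hfin⟩
  exact ENNReal.toReal_mono (measure_ne_top μ _) (measure_mono (self_subset_thickening hε F))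

lemma isoProfile_eq_top_of_isoProfile_half_eq_top (μ : Measure Ω)
    (hconc : ConcaveOn ℝ (Ioo 0 1) fun t => (isoProfile μ t).toReal)
    (htop : isoProfile μ (1 / 2) = ⊤) {t : ℝ} (ht : t ∈ Ioo (0 : ℝ) 1) {a : ℝ} (ha : 0 < a)
    (hle : ENNReal.ofReal a ≤ isoProfile μ t) : isoProfile μ t = ⊤ := by
  have hzero : (isoProfile μ t).toReal = 0 :=
    hconc.eq_zero_of_nonneg_of_apply_half_eq_zero (fun _ _ => ENNReal.toReal_nonneg)
      (by rw [htop, ENNReal.toReal_top]) ht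
  by_contra hne
  linarith [(ENNReal.ofReal_le_iff_le_toReal hne).1 hle]

lemma isCheegerBound_cond_nonpos_of_isoProfile_half_eq_top [BorelSpace Ω] (μ : Measure Ω)
    [IsProbabilityMeasure μ] {L : Set Ω} (hL : MeasurableSet L) (hq : 1 / 2 < (μ L).toReal)
    (hconc : ConcaveOn ℝ (Ioo 0 1) fun t => (isoProfile μ t).toReal)
    (htop : isoProfile μ (1 / 2) = ⊤) (hbdd : BddAbove {D | IsCheegerBound μ[|L] D})
    {D : ℝ} (hD : IsCheegerBound μ[|L] D) : D ≤ 0 := by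
  by_contra! hDpos
  set q := (μ L).toReal
  have hq1 : q ≤ 1 := measureReal_le_one
  have hprofile : ∀ t ∈ Ioo (1 - q) q, isoProfile μ t = ⊤ := fun t ht =>
    isoProfile_eq_top_of_isoProfile_half_eq_top μ hconc htop
      ⟨by linarith [ht.1], by linarith [ht.2]⟩
      (mul_pos hDpos (lt_min (sub_pos.2 ht.1) (sub_pos.2 ht.2)))
      (ofReal_mul_min_le_isoProfile μ hL hD t)
  have hno : ∀ X, MeasurableSet X → (μ X).toReal ∉ Ioo (1 - q) q := fun X hX hXq => by
    obtain ⟨C, hC, hCq, hfin⟩ :=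
      exists_boundaryMeasure_ne_top_of_measure_mem_Ioo μ hX (by linarith) hXq
    exact hfin (top_unique ((hprofile _ hCq).symm.trans_le (isoProfile_le_boundaryMeasure μ hC)))
  have : IsProbabilityMeasure μ[|L] :=
    cond_isProbabilityMeasure (ENNReal.toReal_pos_iff.1 (by linarith)).1.ne'
  refine not_bddAbove_isCheegerBound hD hDpos (fun A hA =>
    boundaryMeasure_eq_zero_of_measure_gap (div_pos (by linarith) (by linarith))
      (fun S hS => cond_eq_zero_or_le_of_forall_measure_notMem_Ioo μ hL (by linarith) hno hS)
      hA) hbdd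

end

theorem cheeger_single_step_stability_general {Ω : Type*} [MetricSpace Ω] [MeasurableSpace Ω]
    [BorelSpace Ω]
    (μK : Measure Ω) [IsProbabilityMeasure μK]
    (L : Set Ω) (hLmeas : MeasurableSet L)
    (p : ℝ) (hp : 1 / 2 < p)
    (hL : ENNReal.ofReal p ≤ μK L)
    (μL : Measure Ω) (hμL : μL = (μK L)⁻¹ • μK.restrict L)
    (hIconc : ConcaveOn ℝ (Set.Ioo 0 1) (fun t => (isoProfile μK t).toReal)) :
    (2 * p - 1) * cheegerConst μL ≤ 2 * (isoProfile μK (1 / 2)).toReal := by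
  obtain rfl : μL = μK[|L] := hμL
  have hpq : p ≤ (μK L).toReal :=
    (ENNReal.ofReal_le_iff_le_toReal (measure_ne_top _ _)).1 hL
  rw [cheegerConst_eq_sSup]
  by_cases hbdd : BddAbove {D | IsCheegerBound μK[|L] D}
  swap
  · rw [Real.sSup_of_not_bddAbove hbdd, mul_zero]
    positivity
  have h2p : 0 < 2 * p - 1 := by linarith
  rw [mul_comm, ← le_div_iff₀ h2p]
  refine csSup_le ⟨0, isCheegerBound_zero _⟩ fun D hD => (le_div_iff₀ h2p).2 ?_
  by_cases htop : isoProfile μK (1 / 2) = ⊤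
  · have hD0 := isCheegerBound_cond_nonpos_of_isoProfile_half_eq_top μK hLmeas (by linarith)
      hIconc htop hbdd hD
    nlinarith [ENNReal.toReal_nonneg (a := isoProfile μK (1 / 2))]
  · have h := ofReal_mul_min_le_isoProfile μK hLmeas hD (1 / 2)
    rw [show 1 / 2 - (1 - (μK L).toReal) = (μK L).toReal - 1 / 2 by ring, min_self,
      ENNReal.ofReal_le_iff_le_toReal htop] at h
    nlinarith [hD.1]

/-- single-step Cheeger stability: if `λ_L = λ_K|_L/λ_K(L)` with
`λ_K(L) ≥ p > 1/2`, the isoperimetric profile `I` of `λ_K` is concave on `(0,1)`,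
symmetric about `1/2`, satisfies `I(t) ≥ D_{Che}(K)·min(t,1−t)` with
`D_{Che}(K) = 2·I(1/2)`, and every Borel set of `λ_K`-measure `1/2` has boundary measure
at least `D_{Che}(K)/2`, then `D_{Che}(K) ≥ (2p−1)·D_{Che}(L)`. -/
theorem cheeger_single_step_stability {Ω : Type*} [MetricSpace Ω] [MeasurableSpace Ω]
    [BorelSpace Ω]
    (μK : Measure Ω) [IsProbabilityMeasure μK]
    (L : Set Ω) (hLmeas : MeasurableSet L)
    (p : ℝ) (hp : 1 / 2 < p) (hp1 : p ≤ 1)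
    (hL : ENNReal.ofReal p ≤ μK L)
    (μL : Measure Ω) (hμL : μL = (μK L)⁻¹ • μK.restrict L)
    (hIconc : ConcaveOn ℝ (Set.Ioo 0 1) (fun t => (isoProfile μK t).toReal))
    (hIsym : ∀ t ∈ Set.Icc (0 : ℝ) 1, isoProfile μK t = isoProfile μK (1 - t))
    (hIlin : ∀ t ∈ Set.Icc (0 : ℝ) 1,
      ENNReal.ofReal (2 * (isoProfile μK (1 / 2)).toReal * min t (1 - t)) ≤ isoProfile μK t)
    (hhalf : ∀ A : Set Ω, MeasurableSet A → (μK A).toReal = 1 / 2 →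
      ENNReal.ofReal ((isoProfile μK (1 / 2)).toReal) ≤ boundaryMeasure μK A) :
    (2 * p - 1) * cheegerConst μL ≤ 2 * (isoProfile μK (1 / 2)).toReal :=
  cheeger_single_step_stability_general μK L hLmeas p hp hL μL hμL hIconc
end

section
/- Semigroup L¹ commutation estimate implies isoperimetric lower bound (final optimization step): let 0 < μ(A) < 1, p ≥ 1, q ≥ 2, D > 0 and suppose that for every t > 0, √(2t)·μ⁺(A) ≥ 2[μ(A)(1−μ(A)) − (1/(√(2t)·D))·‖χ_A − μ(A)‖_{L^q(μ)}·‖χ_A − μ(A)‖_{L^{p*}(μ)}], where p* is the Hölder conjugate of p. Using ‖χ_A − μ(A)‖_{L^s(μ)} ≤ 2(μ(A)(1−μ(A)))^{1/s} for s ≥ 1 and choosing t = (32/D²)·(μ(A)(1−μ(A)))^{2(1/q − 1/p)}, one obtains μ⁺(A) ≥ (D/8)·(μ(A)(1−μ(A)))^{2 − 1/q − 1/p*}, and hence, if r := 1 + 1/p − 1/q ≤ 2, μ⁺(A) ≥ (D/(8·2^r))·min(μ(A), 1−μ(A))^r. -/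
lemma le_of_forall_pos_two_mul_sub_le {m D c C B : ℝ} (hm : 0 < m) (hD : 0 < D) (hc : 0 < c)
    (hC : C ≤ c) (h : ∀ s > 0, 2 * (m - 1 / (s * D) * C) ≤ s * B) :
    m ^ 2 * D / (2 * c) ≤ B := by
  -- the choice of `s` that makes the error term `C / (s * D)` at most `m / 2`
  set s := 2 * c / (m * D)
  have hs : 0 < s := by positivity
  have hsD : s * D = 2 * c / m := by simp only [s]; field_simp
  have hloss : 1 / (s * D) * C ≤ m / 2 :=
    calc 1 / (s * D) * C ≤ 1 / (s * D) * c := by gcongr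
      _ = m / 2 := by rw [hsD]; field_simp
  have hms : m ≤ s * B := by linarith [h s hs]
  calc m ^ 2 * D / (2 * c) = m * D / (2 * c) * m := by ring
    _ ≤ m * D / (2 * c) * (s * B) := by gcongr
    _ = B := by simp only [s]; field_simp

lemma forall_pos_of_forall_pos_sqrt_two_mul {P : ℝ → Prop}
    (h : ∀ t > (0 : ℝ), P (Real.sqrt (2 * t))) : ∀ s > (0 : ℝ), P s := by
  intro s hs
  have := h (s ^ 2 / 2) (by positivity)
  rwa [mul_div_cancel₀ _ two_ne_zero, Real.sqrt_sq hs.le] at this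

lemma mul_le_four_mul_rpow_add {m x y α β : ℝ} (hm : 0 < m) (hx : x ≤ 2 * m ^ α)
    (hy : y ≤ 2 * m ^ β) (hy0 : 0 ≤ y) : x * y ≤ 4 * m ^ (α + β) := by
  calc x * y ≤ 2 * m ^ α * (2 * m ^ β) := mul_le_mul hx hy hy0 (by positivity)
    _ = 4 * m ^ (α + β) := by rw [Real.rpow_add hm]; ring

lemma min_le_two_mul_mul_one_sub {a : ℝ} (ha0 : 0 ≤ a) (ha1 : a ≤ 1) :
    min a (1 - a) ≤ 2 * (a * (1 - a)) := by
  rcases le_total a (1 - a) with h | h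
  · rw [min_eq_left h]; nlinarith
  · rw [min_eq_right h]; nlinarith

theorem semigroup_optimization_step_general (a B D p q Nq Np : ℝ)
    (ha : a ∈ Set.Ioo (0 : ℝ) 1) (hp : 1 ≤ p) (hq : 2 ≤ q) (hD : 0 < D)
    (hNp0 : 0 ≤ Np)
    (hNq : Nq ≤ 2 * (a * (1 - a)) ^ (1 / q))
    (hNp : Np ≤ 2 * (a * (1 - a)) ^ (1 - 1 / p))
    (hmain : ∀ t > (0 : ℝ),
      2 * (a * (1 - a) - 1 / (Real.sqrt (2 * t) * D) * Nq * Np) ≤ Real.sqrt (2 * t) * B) :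
    D / 8 * (a * (1 - a)) ^ (1 + 1 / p - 1 / q) ≤ B ∧
      D / (8 * 2 ^ (1 + 1 / p - 1 / q)) * (min a (1 - a)) ^ (1 + 1 / p - 1 / q) ≤ B := by
  obtain ⟨ha0, ha1⟩ := ha
  set m := a * (1 - a)
  set r := 1 + 1 / p - 1 / q
  have hm : 0 < m := mul_pos ha0 (sub_pos.2 ha1)
  have hr : 0 ≤ r := by
    have : 1 / q ≤ 1 / 2 := by gcongr
    have : 0 ≤ 1 / p := by positivity
    linarith
  have hNqNp : Nq * Np ≤ 4 * m ^ (2 - r) := by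
    convert mul_le_four_mul_rpow_add hm hNq hNp hNp0 using 3; ring
  have hfirst : D / 8 * m ^ r ≤ B := by
    have hsplit : m ^ r * m ^ (2 - r) = m ^ 2 := by
      rw [← Real.rpow_add hm, add_sub_cancel, Real.rpow_two]
    have hopt := le_of_forall_pos_two_mul_sub_le hm hD (by positivity) hNqNp
      (forall_pos_of_forall_pos_sqrt_two_mul (by simpa only [mul_assoc] using hmain))
    rw [← hsplit] at hopt
    convert hopt using 1
    field_simp
    norm_num
  refine ⟨hfirst, ?_⟩
  calc D / (8 * 2 ^ r) * (min a (1 - a)) ^ r ≤ D / (8 * 2 ^ r) * (2 * m) ^ r := by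
        gcongr; exact min_le_two_mul_mul_one_sub ha0.le ha1.le
    _ = D / 8 * m ^ r := by rw [Real.mul_rpow zero_le_two hm.le]; field_simp
    _ ≤ B := hfirst

/-- final optimization step of the semigroup argument: if `a = μ(A) ∈ (0,1)`,
`B = μ⁺(A)`, `p ≥ 1`, `q ≥ 2`, `D > 0`, `Nq = ‖χ_A − a‖_{L^q}` and
`Np = ‖χ_A − a‖_{L^{p*}}` satisfy `N_s ≤ 2(a(1−a))^{1/s}` (with `1/p* = 1 − 1/p`), and for
every `t > 0` one has `√(2t)·B ≥ 2[a(1−a) − Nq·Np/(√(2t)·D)]`, then, with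
`r = 1 + 1/p − 1/q ≤ 2`, `B ≥ (D/8)·(a(1−a))^r ≥ (D/(8·2^r))·min(a,1−a)^r`. -/
theorem semigroup_optimization_step (a B D p q Nq Np : ℝ)
    (ha : a ∈ Set.Ioo (0 : ℝ) 1) (hp : 1 ≤ p) (hq : 2 ≤ q) (hD : 0 < D)
    (hB : 0 ≤ B) (hNq0 : 0 ≤ Nq) (hNp0 : 0 ≤ Np)
    (hNq : Nq ≤ 2 * (a * (1 - a)) ^ (1 / q))
    (hNp : Np ≤ 2 * (a * (1 - a)) ^ (1 - 1 / p))
    (hmain : ∀ t > (0 : ℝ),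
      2 * (a * (1 - a) - 1 / (Real.sqrt (2 * t) * D) * Nq * Np) ≤ Real.sqrt (2 * t) * B)
    (hr : 1 + 1 / p - 1 / q ≤ 2) :
    D / 8 * (a * (1 - a)) ^ (1 + 1 / p - 1 / q) ≤ B ∧
      D / (8 * 2 ^ (1 + 1 / p - 1 / q)) * (min a (1 - a)) ^ (1 + 1 / p - 1 / q) ≤ B :=
  semigroup_optimization_step_general a B D p q Nq Np ha hp hq hD hNp0 hNq hNp hmain
end

section
/- Cheeger implies L¹ Poincaré (Maz'ya–Federer–Fleming, median form) on the real line: let μ be a probability measure on ℝ absolutely continuous with density, and suppose μ⁺(A) ≥ D·min(μ(A), 1−μ(A)) for all Borel sets A ⊆ ℝ, where μ⁺ is the Minkowski boundary measure. Then for every locally Lipschitz f : ℝ → ℝ with median 0, D·∫|f| dμ ≤ ∫|f'| dμ. -/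
open MeasureTheory Filter

/-!
Since `μ` has no atoms, its distribution function `F` takes the value `1/2` at some point `p`.
A locally Lipschitz `f` is absolutely continuous on compact intervals, so
`|f y - f p| ≤ ∫_{[p, y]} |f'|`; integrating in `y` and swapping the integrals gives
`∫ |f - f p| dμ ≤ ∫ |f'(t)| min (F t) (1 - F t) dt`. The Minkowski boundary measure of the
half-line `(-∞, t]` is `F'(t)`, which for a.e. `t` is the density `dμ/dt`; so the Cheeger
inequality for half-lines alone gives `D · min (F t) (1 - F t) ≤ dμ/dt`, whence
`D ∫ |f - f p| dμ ≤ ∫ |f'| dμ`. Since `0` is a median of `f`, `∫ |f| dμ ≤ ∫ |f - c| dμ` for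
every constant `c`.
-/

open Set ProbabilityTheory
open scoped ENNReal Interval

theorem ENNReal.mul_toReal_le_toReal_of_ofReal_mul_le {D : ℝ} {a b : ℝ≥0∞}
    (h : ENNReal.ofReal D * a ≤ b) (hb : b ≠ ∞) : D * a.toReal ≤ b.toReal :=
  calc D * a.toReal ≤ max D 0 * a.toReal := by gcongr; exact le_max_left D 0
    _ = (ENNReal.ofReal D * a).toReal := by rw [ENNReal.toReal_mul, ENNReal.toReal_ofReal']
    _ ≤ b.toReal := ENNReal.toReal_mono hb h

theorem measure_compl_le_of_half_le {α : Type*} [MeasurableSpace α] {μ : Measure α}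
    [IsProbabilityMeasure μ] {s : Set α} (hs : MeasurableSet s) (h : 1 / 2 ≤ μ s) :
    μ sᶜ ≤ μ s :=
  calc μ sᶜ = 1 - μ s := prob_compl_eq_one_sub hs
    _ ≤ 1 - 1 / 2 := tsub_le_tsub_left h 1
    _ = 1 / 2 := by rw [one_div, ENNReal.one_sub_inv_two]
    _ ≤ μ s := h

theorem MeasureTheory.Measure.AbsolutelyContinuous.nullSingletonClass {α : Type*}
    [MeasurableSpace α] {μ ν : Measure α} [NullSingletonClass ν]
    (h : μ ≪ ν) : NullSingletonClass μ :=
  ⟨fun x ↦ h (measure_singleton x)⟩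

section Median

variable {α : Type*} [MeasurableSpace α] {μ : Measure α} {f : α → ℝ}

theorem lintegral_enorm_le_lintegral_enorm_sub_of_nonneg (hf : Measurable f)
    (hmed : μ {x | 0 < f x} ≤ μ {x | f x ≤ 0}) {c : ℝ} (hc : 0 ≤ c) :
    ∫⁻ x, ‖f x‖ₑ ∂μ ≤ ∫⁻ x, ‖f x - c‖ₑ ∂μ := by
  set A := {x | f x ≤ 0}
  have hA : MeasurableSet A := measurableSet_le hf measurable_const
  have hAc : Aᶜ = {x | 0 < f x} := by ext; simp [A]
  have hsub : EqOn (fun x ↦ ‖f x - c‖ₑ) (fun x ↦ ‖f x‖ₑ + ‖c‖ₑ) A := fun x (hx : f x ≤ 0) ↦ by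
    simp only [Real.enorm_eq_ofReal_abs, abs_of_nonpos hx, abs_of_nonneg hc,
      abs_of_nonpos (by linarith : f x - c ≤ 0), ← ENNReal.ofReal_add (neg_nonneg.2 hx) hc]
    ring_nf
  calc ∫⁻ x, ‖f x‖ₑ ∂μ = ∫⁻ x in A, ‖f x‖ₑ ∂μ + ∫⁻ x in Aᶜ, ‖f x‖ₑ ∂μ :=
        (lintegral_add_compl _ hA).symm
    _ ≤ ∫⁻ x in A, ‖f x‖ₑ ∂μ + ∫⁻ x in Aᶜ, (‖f x - c‖ₑ + ‖c‖ₑ) ∂μ := by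
        gcongr with x
        simpa using enorm_add_le (f x - c) c
    _ = ∫⁻ x in A, ‖f x‖ₑ ∂μ + ‖c‖ₑ * μ Aᶜ + ∫⁻ x in Aᶜ, ‖f x - c‖ₑ ∂μ := by
        rw [lintegral_add_right _ measurable_const, setLIntegral_const]; ring
    _ ≤ ∫⁻ x in A, ‖f x‖ₑ ∂μ + ‖c‖ₑ * μ A + ∫⁻ x in Aᶜ, ‖f x - c‖ₑ ∂μ := by
        rw [hAc]; gcongr
    _ = ∫⁻ x, ‖f x - c‖ₑ ∂μ := by
        rw [← setLIntegral_const, ← lintegral_add_right _ measurable_const,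
          ← setLIntegral_congr_fun hA hsub, lintegral_add_compl _ hA]

theorem lintegral_enorm_le_lintegral_enorm_sub (hf : Measurable f)
    (hpos : μ {x | 0 < f x} ≤ μ {x | f x ≤ 0}) (hneg : μ {x | f x < 0} ≤ μ {x | 0 ≤ f x})
    (c : ℝ) : ∫⁻ x, ‖f x‖ₑ ∂μ ≤ ∫⁻ x, ‖f x - c‖ₑ ∂μ := by
  rcases le_total 0 c with hc | hc
  · exact lintegral_enorm_le_lintegral_enorm_sub_of_nonneg hf hpos hc
  · have hmed : μ {x | 0 < -f x} ≤ μ {x | -f x ≤ 0} := by simpa using hneg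
    simpa [neg_add_eq_sub, enorm_sub_rev] using
      lintegral_enorm_le_lintegral_enorm_sub_of_nonneg hf.neg hmed (neg_nonneg.2 hc)

end Median

theorem LocallyLipschitz.enorm_sub_le_lintegral_uIoc {f : ℝ → ℝ} (hf : LocallyLipschitz f)
    (a b : ℝ) : ‖f b - f a‖ₑ ≤ ∫⁻ t in Ι a b, ‖deriv f t‖ₑ := by
  obtain ⟨K, hK⟩ := hf.locallyLipschitzOn.exists_lipschitzOnWith_of_compact isCompact_uIcc
  rw [← hK.absolutelyContinuousOnInterval.integral_deriv_eq_sub, ← enorm_norm,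
    intervalIntegral.norm_integral_eq_norm_integral_uIoc, enorm_norm]
  exact enorm_integral_le_lintegral_enorm _

theorem lintegral_setLIntegral_uIoc (μ ν : Measure ℝ) [SFinite μ] [SFinite ν] (p : ℝ)
    {g : ℝ → ℝ≥0∞} (hg : Measurable g) :
    ∫⁻ y, (∫⁻ t in Ι p y, g t ∂ν) ∂μ = ∫⁻ t, g t * μ {y | t ∈ Ι p y} ∂ν := by
  have hS : MeasurableSet {z : ℝ × ℝ | z.2 ∈ Ι p z.1} :=
    (measurableSet_lt (by fun_prop) measurable_snd).inter
      (measurableSet_le measurable_snd (by fun_prop))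
  calc ∫⁻ y, (∫⁻ t in Ι p y, g t ∂ν) ∂μ = ∫⁻ y, ∫⁻ t, (Ι p y).indicator g t ∂ν ∂μ := by
        simp only [lintegral_indicator measurableSet_uIoc]
    _ = ∫⁻ t, ∫⁻ y, (Ι p y).indicator g t ∂μ ∂ν :=
        lintegral_lintegral_swap ((hg.comp measurable_snd).indicator hS).aemeasurable
    _ = ∫⁻ t, g t * μ {y | t ∈ Ι p y} ∂ν :=
        lintegral_congr fun t ↦ lintegral_indicator_const (hS.preimage measurable_prodMk_right) _

theorem setOf_mem_uIoc_of_le {p t : ℝ} (h : t ≤ p) : {y | t ∈ Ι p y} = Iio t := by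
  ext y
  simp only [mem_ofPred_eq, mem_uIoc, mem_Iio]
  constructor
  · rintro (⟨h₁, h₂⟩ | ⟨h₁, -⟩) <;> linarith
  · exact fun hy ↦ Or.inr ⟨hy, h⟩

theorem setOf_mem_uIoc_of_lt {p t : ℝ} (h : p < t) : {y | t ∈ Ι p y} = Ici t := by
  ext y
  simp only [mem_ofPred_eq, mem_uIoc, mem_Ici]
  constructor
  · rintro (⟨-, h₂⟩ | ⟨h₁, h₂⟩) <;> linarith
  · exact fun hy ↦ Or.inl ⟨h, hy⟩

theorem Metric.thickening_Iic {ε : ℝ} (hε : 0 < ε) (x : ℝ) :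
    Metric.thickening ε (Iic x) = Iio (x + ε) := by
  ext y
  simp only [Metric.mem_thickening_iff, mem_Iic, mem_Iio, Real.dist_eq]
  constructor
  · rintro ⟨z, hz, hd⟩
    linarith [(abs_lt.1 hd).2]
  · intro hy
    refine ⟨min x y, min_le_left _ _, ?_⟩
    rcases le_total y x with h | h
    · simp [min_eq_right h, hε]
    · rw [min_eq_left h, abs_lt]; constructor <;> linarith

section AtomlessProbability

variable {μ : Measure ℝ} [IsProbabilityMeasure μ] [NullSingletonClass μ]

theorem ProbabilityTheory.continuous_cdf : Continuous (cdf μ) := by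
  refine continuous_iff_continuousAt.2 fun x ↦ ?_
  have hright : ContinuousWithinAt (cdf μ) (Ici x) x := (cdf μ).right_continuous x
  have hleft : ContinuousWithinAt (cdf μ) (Iio x) x := by
    rw [(monotone_cdf μ).continuousWithinAt_Iio_iff_leftLim_eq]
    have hjump := (cdf μ).measure_singleton x
    rw [measure_cdf, measure_singleton, eq_comm, ENNReal.ofReal_eq_zero] at hjump
    exact le_antisymm ((monotone_cdf μ).leftLim_le le_rfl) (by linarith)
  exact continuousAt_iff_continuous_left'_right'.2 ⟨hleft, hright.mono Ioi_subset_Ici_self⟩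

variable (μ) in
theorem exists_measure_Iic_eq_half : ∃ p, μ (Iic p) = 1 / 2 := by
  obtain ⟨p, hp⟩ : (1 / 2 : ℝ) ∈ range (cdf μ) :=
    mem_range_of_exists_le_of_exists_ge continuous_cdf
      ((tendsto_cdf_atBot μ).eventually (ge_mem_nhds (by norm_num))).exists
      ((tendsto_cdf_atTop μ).eventually (le_mem_nhds (by norm_num))).exists
  refine ⟨p, ?_⟩
  rw [← ofReal_cdf, hp, ENNReal.ofReal_div_of_pos two_pos, ENNReal.ofReal_one,
    ENNReal.ofReal_ofNat]

theorem measure_setOf_mem_uIoc_eq_min {p : ℝ} (hp : μ (Iic p) = 1 / 2) (t : ℝ) :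
    μ {y | t ∈ Ι p y} = min (μ (Iic t)) (μ (Ioi t)) := by
  have hIoi : μ (Ioi p) = 1 / 2 := by
    rw [← compl_Iic, prob_compl_eq_one_sub measurableSet_Iic, hp, one_div,
      ENNReal.one_sub_inv_two]
  rcases le_or_gt t p with htp | hpt
  · rw [setOf_mem_uIoc_of_le htp, measure_congr Iio_ae_eq_Iic, min_eq_left]
    calc μ (Iic t) ≤ μ (Iic p) := measure_mono (Iic_subset_Iic.2 htp)
      _ = μ (Ioi p) := hp.trans hIoi.symm
      _ ≤ μ (Ioi t) := measure_mono (Ioi_subset_Ioi htp)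
  · rw [setOf_mem_uIoc_of_lt hpt, measure_congr Ioi_ae_eq_Ici.symm, min_eq_right]
    calc μ (Ioi t) ≤ μ (Ioi p) := measure_mono (Ioi_subset_Ioi hpt.le)
      _ = μ (Iic p) := hIoi.trans hp.symm
      _ ≤ μ (Iic t) := measure_mono (Iic_subset_Iic.2 hpt.le)

theorem boundaryMeasure_Iic_of_hasDerivAt_cdf {x ρ : ℝ} (h : HasDerivAt (cdf μ) ρ x) :
    boundaryMeasure μ (Iic x) = ENNReal.ofReal ρ := by
  refine ((ENNReal.continuous_ofReal.tendsto ρ).comp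
    (h.tendsto_slope_zero_right.congr' ?_)).liminf_eq
  filter_upwards [self_mem_nhdsWithin] with ε (hε : 0 < ε)
  rw [Metric.thickening_Iic hε, measure_congr Iio_ae_eq_Iic, ← measureReal_def,
    ← measureReal_def, ← cdf_eq_real, ← cdf_eq_real, smul_eq_mul, div_eq_inv_mul]

theorem ae_ofReal_mul_min_le_rnDeriv {D : ℝ}
    (hche : ∀ A : Set ℝ, MeasurableSet A →
      ENNReal.ofReal (D * min (μ A).toReal (1 - (μ A).toReal)) ≤ boundaryMeasure μ A) :
    ∀ᵐ x, ENNReal.ofReal D * min (μ (Iic x)) (μ (Ioi x)) ≤ μ.rnDeriv volume x := by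
  filter_upwards [(cdf μ).ae_hasDerivAt, μ.rnDeriv_lt_top volume] with x hx hfin
  rw [measure_cdf] at hx
  have hcompl : 1 - μ.real (Iic x) = μ.real (Ioi x) := by
    rw [← compl_Iic, probReal_compl_eq_one_sub measurableSet_Iic]
  have hche_x := hche (Iic x) measurableSet_Iic
  rwa [← measureReal_def, hcompl, ENNReal.ofReal_mul' (by positivity), ENNReal.ofReal_min,
    measureReal_def, measureReal_def, ENNReal.ofReal_toReal (measure_ne_top _ _),
    ENNReal.ofReal_toReal (measure_ne_top _ _), boundaryMeasure_Iic_of_hasDerivAt_cdf hx,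
    ENNReal.ofReal_toReal hfin.ne] at hche_x

theorem ofReal_mul_lintegral_enorm_sub_le_lintegral_enorm_deriv {D : ℝ} (habs : μ ≪ volume)
    (hche : ∀ A : Set ℝ, MeasurableSet A →
      ENNReal.ofReal (D * min (μ A).toReal (1 - (μ A).toReal)) ≤ boundaryMeasure μ A)
    {p : ℝ} (hp : μ (Iic p) = 1 / 2) {f : ℝ → ℝ} (hf : LocallyLipschitz f) :
    ENNReal.ofReal D * ∫⁻ y, ‖f y - f p‖ₑ ∂μ ≤ ∫⁻ t, ‖deriv f t‖ₑ ∂μ := by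
  have hf' : Measurable fun t ↦ ‖deriv f t‖ₑ := (measurable_deriv f).enorm
  calc ENNReal.ofReal D * ∫⁻ y, ‖f y - f p‖ₑ ∂μ
      ≤ ENNReal.ofReal D * ∫⁻ y, (∫⁻ t in Ι p y, ‖deriv f t‖ₑ) ∂μ := by
        gcongr with y
        exact hf.enorm_sub_le_lintegral_uIoc p y
    _ = ∫⁻ t, ‖deriv f t‖ₑ * (ENNReal.ofReal D * min (μ (Iic t)) (μ (Ioi t))) := by
        rw [lintegral_setLIntegral_uIoc μ volume p hf', ← lintegral_const_mul' _ _
          ENNReal.ofReal_ne_top]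
        simp only [measure_setOf_mem_uIoc_eq_min hp]
        ring_nf
    _ ≤ ∫⁻ t, ‖deriv f t‖ₑ * μ.rnDeriv volume t := by
        refine lintegral_mono_ae ?_
        filter_upwards [ae_ofReal_mul_min_le_rnDeriv hche] with t ht
        gcongr
    _ = ∫⁻ t, ‖deriv f t‖ₑ ∂μ := by
        simp only [mul_comm _ (μ.rnDeriv volume _)]
        exact lintegral_rnDeriv_mul habs hf'.aemeasurable

end AtomlessProbability

theorem cheeger_implies_L1_poincare_general (μ : Measure ℝ) [IsProbabilityMeasure μ]
    (habs : μ ≪ MeasureTheory.volume) (D : ℝ)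
    (hche : ∀ A : Set ℝ, MeasurableSet A →
      ENNReal.ofReal (D * min (μ A).toReal (1 - (μ A).toReal)) ≤ boundaryMeasure μ A)
    (f : ℝ → ℝ) (hf : LocallyLipschitz f)
    (hmed₁ : (1 / 2 : ENNReal) ≤ μ {x | 0 ≤ f x})
    (hmed₂ : (1 / 2 : ENNReal) ≤ μ {x | f x ≤ 0})
    (hintf' : Integrable (fun x => |deriv f x|) μ) :
    D * ∫ x, |f x| ∂μ ≤ ∫ x, |deriv f x| ∂μ := by
  have := habs.nullSingletonClass
  obtain ⟨p, hp⟩ := exists_measure_Iic_eq_half μ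
  have hfm : Measurable f := hf.continuous.measurable
  have hpos : μ {x | 0 < f x} ≤ μ {x | f x ≤ 0} := by
    simpa only [compl_ofPred, not_le] using
      measure_compl_le_of_half_le (measurableSet_le hfm measurable_const) hmed₂
  have hneg : μ {x | f x < 0} ≤ μ {x | 0 ≤ f x} := by
    simpa only [compl_ofPred, not_le] using
      measure_compl_le_of_half_le (measurableSet_le measurable_const hfm) hmed₁
  have hmedian := lintegral_enorm_le_lintegral_enorm_sub hfm hpos hneg (f p)
  have hpoincare := ofReal_mul_lintegral_enorm_sub_le_lintegral_enorm_deriv habs hche hp hf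
  have hfin : ∫⁻ t, ‖deriv f t‖ₑ ∂μ ≠ ∞ := by simpa using hintf'.hasFiniteIntegral.ne
  simp only [← Real.norm_eq_abs, integral_norm_eq_lintegral_enorm hfm.aestronglyMeasurable,
    integral_norm_eq_lintegral_enorm (measurable_deriv f).aestronglyMeasurable]
  exact ENNReal.mul_toReal_le_toReal_of_ofReal_mul_le
    ((mul_le_mul_of_nonneg_left hmedian zero_le).trans hpoincare) hfin

/-- Maz'ya–Federer–Fleming, median form, on ℝ: if an absolutely
continuous probability measure `μ` on ℝ satisfies Cheeger's isoperimetric inequality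
`μ⁺(A) ≥ D·min(μ(A), 1−μ(A))`, then every locally Lipschitz `f` with median `0`
satisfies `D·∫|f| dμ ≤ ∫|f'| dμ`. -/
theorem cheeger_implies_L1_poincare (μ : Measure ℝ) [IsProbabilityMeasure μ]
    (habs : μ ≪ MeasureTheory.volume) (D : ℝ) (hD : 0 < D)
    (hche : ∀ A : Set ℝ, MeasurableSet A →
      ENNReal.ofReal (D * min (μ A).toReal (1 - (μ A).toReal)) ≤ boundaryMeasure μ A)
    (f : ℝ → ℝ) (hf : LocallyLipschitz f)
    (hmed₁ : (1 / 2 : ENNReal) ≤ μ {x | 0 ≤ f x})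
    (hmed₂ : (1 / 2 : ENNReal) ≤ μ {x | f x ≤ 0})
    (hintf : Integrable f μ) (hintf' : Integrable (fun x => |deriv f x|) μ) :
    D * ∫ x, |f x| ∂μ ≤ ∫ x, |deriv f x| ∂μ :=
  cheeger_implies_L1_poincare_general μ habs D hche f hf hmed₁ hmed₂ hintf'
end

section
/- Lower semi-continuity under approximation from within: let (Ω, d) be a metric space, μ a Borel probability measure, and A_m Borel sets with μ(A_m) → 1 and μ⁺(A_m) → 0. Set μ_m = μ|_{A_m}/μ(A_m). Then for every t ∈ (0,1), liminf_{m→∞} I_{μ_m}(t) ≥ liminf_{s→t} I_μ(s). -/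
/-!
Take `B` with `μ_m B = t` and `μ_m⁺ B` close to `I_{μ_m} t`, and let `h r = μ (B_r ∩ A_m)`.
Comparing `μ⁺ (B ∩ A_m)` with `μ_m⁺ B` and `μ⁺ A_m` directly fails, because a liminf does not
split over a sum. But `h` is monotone and its difference quotients at `0` are small at
arbitrarily small scales, so by Lebesgue's differentiation theorem it has a differentiability
point `z` near `0` with small `h' z`. For `C = B_z ∩ A_m` one has
`C_ε ⊆ (B_{z+ε} ∩ A_m) ∪ ((A_m)_ε \ A_m)`; the first part contributes the genuine limit `h' z`,
so `μ⁺ C ≤ h' z + μ⁺ A_m`, while `μ C` is close to `μ (B ∩ A_m) = t μ(A_m) ≈ t`.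
-/

open MeasureTheory Filter

open Metric Set Topology ProbabilityTheory
open scoped ENNReal

theorem ENNReal.liminf_add_le_of_tendsto {ι : Type*} {l : Filter ι} [l.NeBot] {u v : ι → ℝ≥0∞}
    {a : ℝ≥0∞} (hu : Tendsto u l (𝓝 a)) : liminf (u + v) l ≤ a + liminf v l := by
  rcases eq_or_ne a ⊤ with rfl | ha
  · simp
  have hsub : Tendsto (fun i => u i - a) l (𝓝 0) := by
    simpa using ENNReal.Tendsto.sub hu tendsto_const_nhds (Or.inr ha)
  calc liminf (u + v) l ≤ liminf ((fun i => a + v i) + fun i => u i - a) l :=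
        liminf_le_liminf (.of_forall fun i => by
          rw [Pi.add_apply, Pi.add_apply, add_right_comm]
          exact add_le_add le_add_tsub le_rfl)
    _ = liminf (fun i => a + v i) l := liminf_add_of_right_tendsto_zero hsub _
    _ = a + liminf v l := liminf_const_add l v a (by isBoundedDefault) (by isBoundedDefault)

theorem Monotone.exists_deriv_lt_of_sub_lt {f : ℝ → ℝ} (hf : Monotone f) {x y c : ℝ}
    (hxy : x ≤ y) (h : f y - f x < c * (y - x)) :
    ∃ z ∈ Ioo x y, DifferentiableAt ℝ f z ∧ deriv f z < c := by
  by_contra! hcon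
  have hle : (fun _ => c) ≤ᵐ[volume.restrict (Icc x y)] deriv f := by
    rw [← restrict_Ioo_eq_restrict_Icc, EventuallyLE, ae_restrict_iff' measurableSet_Ioo]
    filter_upwards [hf.ae_differentiableAt] with z hz hzI using hcon z hzI hz
  have hint := intervalIntegral.integral_mono_ae_restrict hxy intervalIntegrable_const
    (hf.monotoneOn _).intervalIntegrable_deriv hle
  have hFTC := (hf.monotoneOn _).intervalIntegral_deriv_mem_uIcc (a := x) (b := y)
  rw [uIcc_of_le (sub_nonneg.2 (hf hxy))] at hFTC
  rw [intervalIntegral.integral_const, smul_eq_mul] at hint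
  linarith [hFTC.2]

theorem HasDerivAt.tendsto_div_slope_zero_right {f : ℝ → ℝ} {f' x : ℝ} (h : HasDerivAt f f' x) :
    Tendsto (fun r => (f (x + r) - f x) / r) (𝓝[>] 0) (𝓝 f') := by
  simpa only [smul_eq_mul, inv_mul_eq_div] using h.tendsto_slope_zero_right

theorem Metric.thickening_inter_subset {α : Type*} [PseudoMetricSpace α] (ε : ℝ) (S A : Set α) :
    thickening ε (S ∩ A) ⊆ (thickening ε S ∩ A) ∪ (thickening ε A \ A) := by
  intro u hu
  have hS := thickening_subset_of_subset ε inter_subset_left hu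
  have hA := thickening_subset_of_subset ε inter_subset_right hu
  by_cases u ∈ A <;> simp_all

section

variable {Ω : Type*} [PseudoMetricSpace Ω] [MeasurableSpace Ω] {μ : Measure Ω}

theorem measureReal_thickening_inter_le [IsFiniteMeasure μ] {A : Set Ω} (hA : MeasurableSet A)
    (S : Set Ω) {ε : ℝ} (hε : 0 < ε) :
    μ.real (thickening ε (S ∩ A))
      ≤ μ.real (thickening ε S ∩ A) + (μ.real (thickening ε A) - μ.real A) := by
  rw [← measureReal_sdiff (self_subset_thickening hε A) hA]
  exact (measureReal_mono (thickening_inter_subset ε S A)).trans (measureReal_union_le _ _)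

theorem boundaryMeasure_le_smul (ν : Measure Ω) [IsFiniteMeasure ν] (B : Set Ω) {c : ℝ≥0∞}
    (hc : 1 ≤ c) (hc' : c ≠ ⊤) : boundaryMeasure ν B ≤ boundaryMeasure (c • ν) B := by
  refine liminf_le_liminf ?_
  filter_upwards [self_mem_nhdsWithin] with ε (hε : 0 < ε)
  have hB : ν.real B ≤ ν.real (thickening ε B) := measureReal_mono (self_subset_thickening hε B)
  have hc₁ : 1 ≤ c.toReal := by simpa using ENNReal.toReal_mono hc' hc
  simp only [Measure.smul_apply, smul_eq_mul, ENNReal.toReal_mul]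
  gcongr ENNReal.ofReal (?_ / _)
  change ν.real _ - ν.real B ≤ c.toReal * ν.real _ - c.toReal * ν.real B
  nlinarith

theorem isoProfile_measureReal_le {C : Set Ω} (hC : MeasurableSet C) :
    isoProfile μ (μ.real C) ≤ boundaryMeasure μ C :=
  iInf₂_le_of_le C hC (iInf_le _ rfl)

theorem exists_of_isoProfile_lt {t : ℝ} {b : ℝ≥0∞} (h : isoProfile μ t < b) :
    ∃ B, MeasurableSet B ∧ μ.real B = t ∧ boundaryMeasure μ B < b := by
  simpa only [isoProfile, iInf_lt_iff, exists_prop, measureReal_def] using h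

theorem boundaryMeasure_thickening_inter_le [IsFiniteMeasure μ] {A : Set Ω} (hA : MeasurableSet A)
    {B : Set Ω} {z d : ℝ} (hd : HasDerivAt (fun r => μ.real (thickening r B ∩ A)) d z) :
    boundaryMeasure μ (thickening z B ∩ A) ≤ ENNReal.ofReal d + boundaryMeasure μ A := by
  refine (liminf_le_liminf ?_).trans (ENNReal.liminf_add_le_of_tendsto
    (v := fun ε => ENNReal.ofReal ((μ.real (thickening ε A) - μ.real A) / ε))
    ((ENNReal.continuous_ofReal.tendsto d).comp hd.tendsto_div_slope_zero_right))
  filter_upwards [self_mem_nhdsWithin] with ε (hε : 0 < ε)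
  have hgrowth : μ.real (thickening ε (thickening z B ∩ A))
      ≤ μ.real (thickening (z + ε) B ∩ A) + (μ.real (thickening ε A) - μ.real A) := by
    refine (measureReal_thickening_inter_le hA _ hε).trans (add_le_add_left ?_ _)
    rw [add_comm z]
    exact measureReal_mono (inter_subset_inter_left _ (thickening_thickening_subset ε z B))
  refine le_trans ?_ ENNReal.ofReal_add_le
  gcongr ENNReal.ofReal ?_
  rw [← add_div]
  gcongr ?_ / _
  change μ.real _ - μ.real _ ≤ _
  linarith

theorem exists_thickening_inter_boundaryMeasure_le [IsFiniteMeasure μ] {A : Set Ω}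
    (hA : MeasurableSet A) {B : Set Ω} {β η δ : ℝ}
    (hB : boundaryMeasure (μ.restrict A) B < ENNReal.ofReal β) (hη : 0 < η) (hδ : 0 < δ) :
    ∃ z > 0, μ.real (thickening z B ∩ A) < μ.real (B ∩ A) + η ∧
      boundaryMeasure μ (thickening z B ∩ A) ≤ ENNReal.ofReal (β + δ) + boundaryMeasure μ A := by
  set h : ℝ → ℝ := fun r => μ.real (thickening r B ∩ A)
  have hmono : Monotone h := fun r s hrs =>
    measureReal_mono (inter_subset_inter_left _ (thickening_mono hrs B))
  have hlow : ∀ r > 0, μ.real (B ∩ A) ≤ h r := fun r hr =>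
    measureReal_mono (inter_subset_inter_left _ (self_subset_thickening hr B))
  obtain ⟨ε, hεβ, hε0, hεη⟩ : ∃ ε, h ε - μ.real (B ∩ A) < β * ε ∧ 0 < ε ∧ β * ε < η := by
    simp only [boundaryMeasure, Measure.restrict_apply' hA] at hB
    have hsmall : ∀ᶠ ε in 𝓝[>] (0 : ℝ), β * ε < η :=
      (ContinuousAt.eventually_lt (f := (β * ·)) (by fun_prop) continuousAt_const
        (by simpa using hη)).filter_mono nhdsWithin_le_nhds
    refine ((frequently_lt_of_liminf_lt (by isBoundedDefault) hB).and_eventually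
      (eventually_mem_nhdsWithin.and hsmall)).exists.imp fun ε ⟨hq, (hε : 0 < ε), hεη⟩ => ?_
    exact ⟨(div_lt_iff₀ hε).1 (ENNReal.ofReal_lt_ofReal_iff'.1 hq).1, hε, hεη⟩
  obtain ⟨x, ⟨hxε, hx⟩, hx0⟩ : ∃ x, (x < ε ∧ β * ε < (β + δ) * (ε - x)) ∧ 0 < x := by
    have hgap : β * ε < (β + δ) * (ε - 0) := by nlinarith
    exact ((((eventually_lt_nhds hε0).and (ContinuousAt.eventually_lt continuousAt_const
      (g := fun x => (β + δ) * (ε - x)) (by fun_prop) hgap)).filter_mono nhdsWithin_le_nhds).and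
      (eventually_mem_nhdsWithin (s := Ioi 0))).exists
  obtain ⟨z, ⟨hxz, hzε⟩, hzdiff, hzderiv⟩ :=
    hmono.exists_deriv_lt_of_sub_lt (c := β + δ) hxε.le (by linarith [hlow x hx0])
  refine ⟨z, hx0.trans hxz, by linarith [hmono hzε.le], ?_⟩
  calc boundaryMeasure μ (thickening z B ∩ A)
      ≤ ENNReal.ofReal (deriv h z) + boundaryMeasure μ A :=
        boundaryMeasure_thickening_inter_le hA hzdiff.hasDerivAt
    _ ≤ ENNReal.ofReal (β + δ) + boundaryMeasure μ A := by gcongr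

theorem exists_isoProfile_le_of_isoProfile_cond_lt [OpensMeasurableSpace Ω]
    [IsProbabilityMeasure μ] {A : Set Ω} (hA : MeasurableSet A) (hA0 : μ A ≠ 0) {t β η : ℝ}
    (ht : isoProfile μ[|A] t < ENNReal.ofReal β) (hη : 0 < η) :
    ∃ s, |s - t| < 1 - μ.real A + η ∧
      isoProfile μ s ≤ ENNReal.ofReal (β + η) + boundaryMeasure μ A := by
  have := cond_isProbabilityMeasure (μ := μ) hA0
  obtain ⟨B, -, rfl, hB⟩ := exists_of_isoProfile_lt ht
  have hrestr : boundaryMeasure (μ.restrict A) B < ENNReal.ofReal β :=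
    (boundaryMeasure_le_smul _ B (ENNReal.one_le_inv.2 prob_le_one)
      (ENNReal.inv_ne_top.2 hA0)).trans_lt hB
  obtain ⟨z, hz0, hzη, hzbd⟩ := exists_thickening_inter_boundaryMeasure_le hA hrestr hη hη
  have hC : MeasurableSet (thickening z B ∩ A) := isOpen_thickening.measurableSet.inter hA
  refine ⟨μ.real (thickening z B ∩ A), ?_, (isoProfile_measureReal_le hC).trans hzbd⟩
  have hBC : μ.real (B ∩ A) ≤ μ.real (thickening z B ∩ A) :=
    measureReal_mono (inter_subset_inter_left _ (self_subset_thickening hz0 B))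
  have hcond : μ[|A].real B * μ.real A = μ.real (B ∩ A) := by
    have hc : μ.real A ≠ 0 := (ENNReal.toReal_pos hA0 (measure_ne_top μ A)).ne'
    rw [measureReal_def, cond_apply hA, ENNReal.toReal_mul, ENNReal.toReal_inv, inter_comm]
    change (μ.real A)⁻¹ * μ.real (B ∩ A) * μ.real A = _
    field_simp
  have h1 : μ[|A].real B ≤ 1 := measureReal_le_one
  have h2 : μ.real A ≤ 1 := measureReal_le_one
  rw [abs_sub_lt_iff]
  constructor <;> nlinarith [measureReal_nonneg (μ := μ[|A]) (s := B)]

end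

theorem profile_lsc_approx_from_within_general {Ω : Type*} [MetricSpace Ω] [MeasurableSpace Ω]
    [BorelSpace Ω]
    (μ : Measure Ω) [IsProbabilityMeasure μ]
    (A : ℕ → Set Ω) (hA : ∀ m, MeasurableSet (A m))
    (hA1 : Tendsto (fun m => μ (A m)) atTop (nhds 1))
    (hA2 : Tendsto (fun m => boundaryMeasure μ (A m)) atTop (nhds 0))
    (t : ℝ) :
    liminf (fun s => isoProfile μ s) (nhds t)
      ≤ liminf (fun m => isoProfile ((μ (A m))⁻¹ • μ.restrict (A m)) t) atTop := by
  by_contra! hlt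
  obtain ⟨β, hβ0, hβlim, hβ⟩ := ENNReal.lt_iff_exists_real_btwn.1 hlt
  obtain ⟨β₁, -, hββ₁, hβ₁⟩ := ENNReal.lt_iff_exists_real_btwn.1 hβ
  obtain ⟨η, hη, hβη⟩ : ∃ η, 0 < η ∧ β + 2 * η = β₁ :=
    ⟨(β₁ - β) / 2, by linarith [(ENNReal.ofReal_lt_ofReal_iff'.1 hββ₁).1], by ring⟩
  obtain ⟨w, hw, hnear⟩ := Metric.eventually_nhds_iff.1 (eventually_lt_of_lt_liminf hβ₁)
  have hμA : Tendsto (fun m => μ.real (A m)) atTop (𝓝 1) :=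
    (ENNReal.tendsto_toReal ENNReal.one_ne_top).comp hA1
  obtain ⟨m, hmβ, hmη, hmw, hm0⟩ :=
    ((frequently_lt_of_liminf_lt (by isBoundedDefault) hβlim).and_eventually
    ((hA2.eventually_lt_const (ENNReal.ofReal_pos.2 hη)).and
    ((hμA.eventually_const_lt (by linarith : 1 - w / 2 < 1)).and
    (hA1.eventually_const_lt zero_lt_one)))).exists
  obtain ⟨s, hs, hsI⟩ :=
    exists_isoProfile_le_of_isoProfile_cond_lt (hA m) hm0.ne' hmβ (lt_min hη (half_pos hw))
  have hI : isoProfile μ s < ENNReal.ofReal β₁ :=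
    calc isoProfile μ s ≤ ENNReal.ofReal (β + min η (w / 2)) + boundaryMeasure μ (A m) := hsI
      _ < ENNReal.ofReal (β + η) + ENNReal.ofReal η :=
        ENNReal.add_lt_add_of_le_of_lt ENNReal.ofReal_ne_top
          (ENNReal.ofReal_le_ofReal (by linarith [min_le_left η (w / 2)])) hmη
      _ = ENNReal.ofReal β₁ := by
        rw [← ENNReal.ofReal_add (by positivity) hη.le, ← hβη]; congr 1; ring
  exact (hnear (by rw [Real.dist_eq]; linarith [min_le_right η (w / 2)])).not_gt hI

/-- lower semi-continuity of the profile under approximation from within: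
if `μ(A_m) → 1`, `μ⁺(A_m) → 0` and `μ_m = μ|_{A_m}/μ(A_m)`, then
`liminf_m I_{μ_m}(t) ≥ liminf_{s→t} I_μ(s)` for every `t ∈ (0,1)`. -/
theorem profile_lsc_approx_from_within {Ω : Type*} [MetricSpace Ω] [MeasurableSpace Ω]
    [BorelSpace Ω]
    (μ : Measure Ω) [IsProbabilityMeasure μ]
    (A : ℕ → Set Ω) (hA : ∀ m, MeasurableSet (A m))
    (hA1 : Tendsto (fun m => μ (A m)) atTop (nhds 1))
    (hA2 : Tendsto (fun m => boundaryMeasure μ (A m)) atTop (nhds 0))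
    (t : ℝ) (ht : t ∈ Set.Ioo (0 : ℝ) 1) :
    liminf (fun s => isoProfile μ s) (nhds t)
      ≤ liminf (fun m => isoProfile ((μ (A m))⁻¹ • μ.restrict (A m)) t) atTop :=
  profile_lsc_approx_from_within_general μ A hA hA1 hA2 t
end

section
/- Symmetry of the isoperimetric profile: let (Ω, d, μ) be a metric probability space and define the 1-capacity Cap₁(a,b) for 0 ≤ a ≤ b ≤ 1 as the infimum of ∫|∇Φ| dμ over Lipschitz Φ : Ω → [0,1] with μ{Φ=1} ≥ a and μ{Φ=0} ≥ 1−b. Given that inf_{a≤t≤b} I(t) ≤ Cap₁(a,b) ≤ inf_{a≤t<b} I(t) for all 0 < a < b < 1 and the identity Cap₁(a,b) = Cap₁(1−b,1−a), conclude: if the isoperimetric profile I is lower semi-continuous at t and at 1−t for t ∈ (0,1), then I(t) = I(1−t). -/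
open MeasureTheory Filter

/-- The modulus of the gradient `|∇Φ|(x) = limsup_{y→x} |Φ(y) − Φ(x)|/d(x,y)`. -/
noncomputable def gradMod {Ω : Type*} [PseudoMetricSpace Ω] (f : Ω → ℝ) (x : Ω) : ℝ :=
  limsup (fun y => |f y - f x| / dist y x) (nhdsWithin x {x}ᶜ)

/-- The 1-capacity `Cap₁(a,b)`: the infimum of `∫|∇Φ| dμ` over Lipschitz
`Φ : Ω → [0,1]` with `μ{Φ=1} ≥ a` and `μ{Φ=0} ≥ 1−b`. -/
noncomputable def cap1 {Ω : Type*} [PseudoMetricSpace Ω] [MeasurableSpace Ω]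
    (μ : Measure Ω) (a b : ℝ) : ENNReal :=
  ⨅ (Φ : Ω → ℝ) (_ : ∃ K : NNReal, LipschitzWith K Φ)
    (_ : ∀ x, Φ x ∈ Set.Icc (0 : ℝ) 1)
    (_ : ENNReal.ofReal a ≤ μ {x | Φ x = 1})
    (_ : ENNReal.ofReal (1 - b) ≤ μ {x | Φ x = 0}),
      ∫⁻ x, ENNReal.ofReal (gradMod Φ x) ∂μ

/-!
Take `0 < a < 1 - t` and put `b = 1 - a`. The sandwich and the symmetry of the capacity give
`inf_{a ≤ s ≤ 1-t} I(s) ≤ Cap₁(a, 1-t) = Cap₁(t, b) ≤ I(t)`,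
and as `a ↑ 1 - t` lower semi-continuity of `I` at `1 - t` turns the left-hand side into
`I(1-t)`. Hence `I(1-t) ≤ I(t)`, and the same argument at `1 - t` gives the reverse inequality.
-/

theorem LowerSemicontinuousAt.le_of_frequently_iInf_Icc_le
    {β α : Type*} [LinearOrder β] [TopologicalSpace β] [OrderTopology β] [NoMinOrder β]
    [CompleteLinearOrder α] [DenselyOrdered α] {f : β → α} {x : β} {c : α}
    (hf : LowerSemicontinuousAt f x)
    (h : ∃ᶠ a in nhdsWithin x (Set.Iio x), ⨅ s ∈ Set.Icc a x, f s ≤ c) :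
    f x ≤ c := by
  by_contra! hcx
  obtain ⟨c', hcc', hc'x⟩ := exists_between hcx
  obtain ⟨l, hlx, hl⟩ := exists_Ioc_subset_of_mem_nhds (hf c' hc'x) (exists_lt x)
  obtain ⟨a, ha_le, hla, -⟩ := (h.and_eventually (Ioo_mem_nhdsLT hlx)).exists
  have hc'_le : c' ≤ ⨅ s ∈ Set.Icc a x, f s :=
    le_iInf₂ fun s hs => (hl ⟨hla.trans_le hs.1, hs.2⟩).le
  exact (hcc'.trans_le (hc'_le.trans ha_le)).false

theorem le_of_capacity_sandwich {α : Type*} [CompleteLinearOrder α] [DenselyOrdered α]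
    {I : ℝ → α} {C : ℝ → ℝ → α}
    (hlower : ∀ a b : ℝ, 0 < a → a < b → b < 1 → ⨅ s ∈ Set.Icc a b, I s ≤ C a b)
    (hupper : ∀ a b : ℝ, 0 < a → a < b → b < 1 → C a b ≤ ⨅ s ∈ Set.Ico a b, I s)
    (hsymm : ∀ a b : ℝ, C a b = C (1 - b) (1 - a))
    {t : ℝ} (ht : t ∈ Set.Ioo (0 : ℝ) 1) (hI : LowerSemicontinuousAt I (1 - t)) :
    I (1 - t) ≤ I t := by
  obtain ⟨ht₀, ht₁⟩ := ht
  refine hI.le_of_frequently_iInf_Icc_le (Eventually.frequently ?_)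
  filter_upwards [Ioo_mem_nhdsLT (sub_pos.2 ht₁)] with a ⟨ha₀, hat⟩
  calc ⨅ s ∈ Set.Icc a (1 - t), I s
      ≤ C a (1 - t) := hlower a (1 - t) ha₀ hat (by linarith)
    _ = C t (1 - a) := by rw [hsymm, sub_sub_cancel]
    _ ≤ ⨅ s ∈ Set.Ico t (1 - a), I s := hupper t (1 - a) ht₀ (by linarith) (by linarith)
    _ ≤ I t := iInf₂_le t ⟨le_rfl, by linarith⟩

theorem profile_symmetry_general {Ω : Type*} [MetricSpace Ω] [MeasurableSpace Ω]
    (μ : Measure Ω)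
    (hsand : ∀ a b : ℝ, 0 < a → a < b → b < 1 →
      (⨅ s ∈ Set.Icc a b, isoProfile μ s) ≤ cap1 μ a b ∧
        cap1 μ a b ≤ ⨅ s ∈ Set.Ico a b, isoProfile μ s)
    (hcapsym : ∀ a b : ℝ, cap1 μ a b = cap1 μ (1 - b) (1 - a))
    (t : ℝ) (ht : t ∈ Set.Ioo (0 : ℝ) 1)
    (hlsc₁ : LowerSemicontinuousAt (fun s => isoProfile μ s) t)
    (hlsc₂ : LowerSemicontinuousAt (fun s => isoProfile μ s) (1 - t)) :
    isoProfile μ t = isoProfile μ (1 - t) := by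
  have hlower := fun a b ha hab hb => (hsand a b ha hab hb).1
  have hupper := fun a b ha hab hb => (hsand a b ha hab hb).2
  have ht' : 1 - t ∈ Set.Ioo (0 : ℝ) 1 := ⟨by linarith [ht.2], by linarith [ht.1]⟩
  refine le_antisymm ?_ (le_of_capacity_sandwich hlower hupper hcapsym ht hlsc₂)
  simpa using le_of_capacity_sandwich hlower hupper hcapsym ht' (by simpa using hlsc₁)

/-- symmetry of the isoperimetric profile: given the capacity sandwich
`inf_{a≤s≤b} I(s) ≤ Cap₁(a,b) ≤ inf_{a≤s<b} I(s)` for `0 < a < b < 1` and the identity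
`Cap₁(a,b) = Cap₁(1−b,1−a)`, if `I` is lower semi-continuous at `t` and `1−t` for
`t ∈ (0,1)`, then `I(t) = I(1−t)`. -/
theorem profile_symmetry {Ω : Type*} [MetricSpace Ω] [MeasurableSpace Ω] [BorelSpace Ω]
    (μ : Measure Ω) [IsProbabilityMeasure μ]
    (hsand : ∀ a b : ℝ, 0 < a → a < b → b < 1 →
      (⨅ s ∈ Set.Icc a b, isoProfile μ s) ≤ cap1 μ a b ∧
        cap1 μ a b ≤ ⨅ s ∈ Set.Ico a b, isoProfile μ s)
    (hcapsym : ∀ a b : ℝ, cap1 μ a b = cap1 μ (1 - b) (1 - a))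
    (t : ℝ) (ht : t ∈ Set.Ioo (0 : ℝ) 1)
    (hlsc₁ : LowerSemicontinuousAt (fun s => isoProfile μ s) t)
    (hlsc₂ : LowerSemicontinuousAt (fun s => isoProfile μ s) (1 - t)) :
    isoProfile μ t = isoProfile μ (1 - t) :=
  profile_symmetry_general μ hsand hcapsym t ht hlsc₁ hlsc₂
end
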